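/- arXiv:2110.13247 — 5 statements merged into one kernel-verified Lean document; each statement's English description precedes it below -/
import Mathlib

section
/- In the ring of formal power series in x and q with rational coefficients, ∏_{n≥0} (1 + x q^{2n+1} + x² q^{4n+2}) = Σ_{n1,n2,n3≥0} (−1)^{n3} x^{n1+2n2+3n3} q^{4C(n1,2)+4C(n2,2)+18C(n3,2)+2n1n2+6n2n3+6n3n1+n1+2n2+9n3} / ((q²;q²)_{n1} (q²;q²)_{n2} (q⁶;q⁶)_{n3}). -/
noncomputable section

instance : TopologicalSpace (MvPowerSeries (Fin 2) ℚ) :=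
  Pi.topologicalSpace

/-- `x` -/
def Xx : MvPowerSeries (Fin 2) ℚ := MvPowerSeries.X 0
/-- `q` -/
def Qq : MvPowerSeries (Fin 2) ℚ := MvPowerSeries.X 1

/-- The `q`-Pochhammer symbol `(A; B)_n = ∏_{k=0}^{n-1} (1 - A⬝Bᵏ)`. -/
def poch (A B : MvPowerSeries (Fin 2) ℚ) (n : ℕ) : MvPowerSeries (Fin 2) ℚ :=
  ∏ k ∈ Finset.range n, (1 - A * B ^ k)

namespace AGAux

open MvPowerSeries Finset

abbrev Mv := MvPowerSeries (Fin 2) ℚ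

instance : T2Space Mv := inferInstanceAs (T2Space ((Fin 2 →₀ ℕ) → ℚ))

/-- degree vector -/
def dd (a b : ℕ) : Fin 2 →₀ ℕ := Finsupp.single 0 a + Finsupp.single 1 b

lemma dd_apply0 (a b : ℕ) : dd a b 0 = a := by simp [dd]
lemma dd_apply1 (a b : ℕ) : dd a b 1 = b := by simp [dd]

lemma dd_eq (d : Fin 2 →₀ ℕ) : dd (d 0) (d 1) = d := by
  ext x
  fin_cases x
  · simpa using dd_apply0 (d 0) (d 1)
  · simpa using dd_apply1 (d 0) (d 1)

lemma dd_le_iff (i j a b : ℕ) : dd i j ≤ dd a b ↔ i ≤ a ∧ j ≤ b := by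
  constructor
  · intro h
    exact ⟨by simpa [dd] using h 0, by simpa [dd] using h 1⟩
  · intro ⟨h1, h2⟩ x
    fin_cases x
    · simpa [dd] using h1
    · simpa [dd] using h2

lemma dd_add (i j a b : ℕ) : dd i j + dd a b = dd (i+a) (j+b) := by
  simp [dd, Finsupp.single_add]
  abel

lemma XQ_eq (i j : ℕ) : Xx ^ i * Qq ^ j = MvPowerSeries.monomial (dd i j) 1 := by
  rw [Xx, Qq, MvPowerSeries.X_pow_eq, MvPowerSeries.X_pow_eq, MvPowerSeries.monomial_mul_monomial,
    one_mul, dd]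

/-- key coefficient extraction lemma -/
lemma Hmul (i j : ℕ) (W : Mv) (a b : ℕ) :
    MvPowerSeries.coeff (dd a b) (Xx ^ i * Qq ^ j * W)
      = if i ≤ a ∧ j ≤ b then MvPowerSeries.coeff (dd (a-i) (b-j)) W else 0 := by
  rw [XQ_eq, MvPowerSeries.coeff_mul]
  by_cases h : i ≤ a ∧ j ≤ b
  · rw [if_pos h]
    rw [Finset.sum_eq_single (dd i j, dd (a-i) (b-j))]
    · simp [MvPowerSeries.coeff_monomial]
    · rintro ⟨e, f⟩ hmem hne
      rw [Finset.HasAntidiagonal.mem_antidiagonal] at hmem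
      rcases eq_or_ne e (dd i j) with rfl | he
      · exfalso; apply hne
        have h0 : dd i j + f = dd i j + dd (a-i) (b-j) := by
          rw [dd_add]
          simp only at hmem
          rw [hmem]
          congr 1 <;> omega
        rw [add_right_injective _ h0]
      · simp [MvPowerSeries.coeff_monomial, he]
    · intro hmem
      exfalso; apply hmem
      rw [Finset.HasAntidiagonal.mem_antidiagonal, dd_add]
      congr 1 <;> omega
  · rw [if_neg h]
    apply Finset.sum_eq_zero
    rintro ⟨e, f⟩ hmem
    rw [Finset.HasAntidiagonal.mem_antidiagonal] at hmem
    have he : e ≠ dd i j := by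
      rintro rfl
      apply h
      constructor
      · have := congrArg (fun d => d 0) hmem
        simp only [Finsupp.add_apply, dd_apply0] at this
        omega
      · have := congrArg (fun d => d 1) hmem
        simp only [Finsupp.add_apply, dd_apply1] at this
        omega
    simp [MvPowerSeries.coeff_monomial, he]


/-- series supported on pure `q` monomials -/
def qOnly (S : Mv) : Prop := ∀ d : Fin 2 →₀ ℕ, d 0 ≠ 0 → MvPowerSeries.coeff d S = 0

lemma qOnly_one : qOnly 1 := by
  intro d hd
  rw [MvPowerSeries.coeff_one, if_neg]
  intro h
  exact hd (by rw [h]; rfl)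

lemma qOnly_Qq_pow (k : ℕ) : qOnly (Qq ^ k) := by
  intro d hd
  rw [Qq, MvPowerSeries.X_pow_eq, MvPowerSeries.coeff_monomial, if_neg]
  intro h
  apply hd
  rw [h]
  simp

lemma qOnly_mul {S T : Mv} (hS : qOnly S) (hT : qOnly T) : qOnly (S * T) := by
  intro d hd
  rw [MvPowerSeries.coeff_mul]
  apply Finset.sum_eq_zero
  rintro ⟨e, f⟩ hmem
  rw [Finset.HasAntidiagonal.mem_antidiagonal] at hmem
  rcases Nat.eq_zero_or_pos (e 0) with he | he
  · have hf : f 0 ≠ 0 := by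
      have := congrArg (fun d => d 0) hmem
      simp only [Finsupp.add_apply] at this
      omega
    rw [hT f hf, mul_zero]
  · rw [hS e (by omega), zero_mul]

lemma qOnly_sub {S T : Mv} (hS : qOnly S) (hT : qOnly T) : qOnly (S - T) := by
  intro d hd
  rw [map_sub, hS d hd, hT d hd, sub_zero]

lemma qOnly_neg {S : Mv} (hS : qOnly S) : qOnly (-S) := by
  intro d hd
  rw [map_neg, hS d hd, neg_zero]

lemma qOnly_inv {S : Mv} (hS : qOnly S) (h : MvPowerSeries.constantCoeff S ≠ 0) :
    qOnly S⁻¹ := by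
  classical
  set B : Mv := fun d => if d 0 = 0 then S⁻¹ d else 0 with hB
  have hBq : qOnly B := by
    intro d hd
    rw [MvPowerSeries.coeff_apply]
    simp only [hB, if_neg hd]
  have hSB : S * B = 1 := by
    ext d
    rw [MvPowerSeries.coeff_mul]
    by_cases hd : d 0 = 0
    · have : ∀ p ∈ Finset.HasAntidiagonal.antidiagonal d,
          MvPowerSeries.coeff p.1 S * MvPowerSeries.coeff p.2 B
          = MvPowerSeries.coeff p.1 S * MvPowerSeries.coeff p.2 S⁻¹ := by
        rintro ⟨e, f⟩ hmem
        rw [Finset.HasAntidiagonal.mem_antidiagonal] at hmem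
        have hf : f 0 = 0 := by
          have := congrArg (fun d => d 0) hmem
          simp only [Finsupp.add_apply] at this
          omega
        simp only [MvPowerSeries.coeff_apply, hB, if_pos hf]
        exact congrArg (S e * ·) (if_pos hf)
      rw [Finset.sum_congr rfl this, ← MvPowerSeries.coeff_mul,
        MvPowerSeries.mul_inv_cancel S h]
    · rw [show MvPowerSeries.coeff d (1:Mv) = 0 by
        rw [MvPowerSeries.coeff_one, if_neg]; intro hh; exact hd (by rw [hh]; rfl)]
      apply Finset.sum_eq_zero
      rintro ⟨e, f⟩ hmem
      rw [Finset.HasAntidiagonal.mem_antidiagonal] at hmem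
      rcases Nat.eq_zero_or_pos (e 0) with he | he
      · have hf : f 0 ≠ 0 := by
          have := congrArg (fun d => d 0) hmem
          simp only [Finsupp.add_apply] at this
          omega
        rw [hBq f hf, mul_zero]
      · rw [hS e (by omega), zero_mul]
  have hfin : S⁻¹ = B := by
    calc S⁻¹ = S⁻¹ * (S * B) := by rw [hSB, mul_one]
    _ = (S⁻¹ * S) * B := by ring
    _ = B := by rw [MvPowerSeries.inv_mul_cancel S h, one_mul]
  rw [hfin]
  exact hBq

lemma constCoeff_one_sub_Qq_pow (k : ℕ) (hk : 1 ≤ k) :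
    MvPowerSeries.constantCoeff (1 - Qq ^ k) = 1 := by
  rw [map_sub, map_one, map_pow, Qq, MvPowerSeries.constantCoeff_X, zero_pow (by omega), sub_zero]

lemma qOnly_one_sub_Qq_pow (k : ℕ) : qOnly (1 - Qq ^ k) :=
  qOnly_sub qOnly_one (qOnly_Qq_pow k)

lemma poch_eq (s : ℕ) (n : ℕ) (hs : 1 ≤ s) :
    poch (Qq ^ s) (Qq ^ s) n = ∏ k ∈ Finset.range n, (1 - Qq ^ (s * k + s)) := by
  unfold poch
  apply Finset.prod_congr rfl
  intro k _
  rw [← pow_mul, ← pow_add]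
  ring_nf

lemma constCoeff_poch (s : ℕ) (n : ℕ) (hs : 1 ≤ s) :
    MvPowerSeries.constantCoeff (poch (Qq ^ s) (Qq ^ s) n) = 1 := by
  rw [poch_eq s n hs, map_prod]
  rw [Finset.prod_eq_one]
  intro k _
  exact constCoeff_one_sub_Qq_pow _ (by omega)

lemma qOnly_poch (s : ℕ) (n : ℕ) (hs : 1 ≤ s) : qOnly (poch (Qq ^ s) (Qq ^ s) n) := by
  rw [poch_eq s n hs]
  induction n with
  | zero => simpa using qOnly_one
  | succ m ih =>
      rw [Finset.prod_range_succ]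
      exact qOnly_mul ih (qOnly_one_sub_Qq_pow _)

/-- poch step -/
lemma poch_succ (s : ℕ) (n : ℕ) (hs : 1 ≤ s) :
    poch (Qq ^ s) (Qq ^ s) (n + 1) = poch (Qq ^ s) (Qq ^ s) n * (1 - Qq ^ (s * n + s)) := by
  rw [poch_eq s (n+1) hs, poch_eq s n hs, Finset.prod_range_succ]

/-- inverse juggling -/
lemma inv_mul_eq {S u : Mv} (hS : MvPowerSeries.constantCoeff S ≠ 0)
    (hu : MvPowerSeries.constantCoeff u ≠ 0) : (S * u)⁻¹ * u = S⁻¹ := by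
  have hSu : MvPowerSeries.constantCoeff (S * u) ≠ 0 := by
    rw [map_mul]; exact mul_ne_zero hS hu
  calc (S * u)⁻¹ * u = (S * u)⁻¹ * u * (S * S⁻¹) := by
        rw [MvPowerSeries.mul_inv_cancel S hS, mul_one]
    _ = ((S * u)⁻¹ * (S * u)) * S⁻¹ := by ring
    _ = S⁻¹ := by rw [MvPowerSeries.inv_mul_cancel _ hSu, one_mul]


/-! ### the summand -/

def NN (n : ℕ × ℕ × ℕ) : ℕ := n.1 + 2 * n.2.1 + 3 * n.2.2

def EE (n : ℕ × ℕ × ℕ) : ℕ :=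
  4 * Nat.choose n.1 2 + 4 * Nat.choose n.2.1 2 + 18 * Nat.choose n.2.2 2
    + 2 * n.1 * n.2.1 + 6 * n.2.1 * n.2.2 + 6 * n.2.2 * n.1
    + n.1 + 2 * n.2.1 + 9 * n.2.2

def den (n : ℕ × ℕ × ℕ) : Mv :=
  poch (Qq ^ 2) (Qq ^ 2) n.1 * poch (Qq ^ 2) (Qq ^ 2) n.2.1 * poch (Qq ^ 6) (Qq ^ 6) n.2.2

def term (n : ℕ × ℕ × ℕ) : Mv := (-1 : Mv) ^ n.2.2 * Xx ^ (NN n) * Qq ^ (EE n) * (den n)⁻¹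

lemma constCoeff_den (n : ℕ × ℕ × ℕ) : MvPowerSeries.constantCoeff (den n) = 1 := by
  rw [den, map_mul, map_mul, constCoeff_poch 2 _ (by omega), constCoeff_poch 2 _ (by omega),
    constCoeff_poch 6 _ (by omega)]
  norm_num

lemma constCoeff_den_ne (n : ℕ × ℕ × ℕ) : MvPowerSeries.constantCoeff (den n) ≠ 0 := by
  rw [constCoeff_den]; exact one_ne_zero

lemma qOnly_den_inv (n : ℕ × ℕ × ℕ) : qOnly (den n)⁻¹ := by
  apply qOnly_inv _ (constCoeff_den_ne n)
  exact qOnly_mul (qOnly_mul (qOnly_poch 2 _ (by omega)) (qOnly_poch 2 _ (by omega)))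
    (qOnly_poch 6 _ (by omega))

lemma qOnly_smul_sign {S : Mv} (k : ℕ) (hS : qOnly S) : qOnly ((-1 : Mv) ^ k * S) := by
  rcases Nat.even_or_odd k with hk | hk
  · rw [hk.neg_one_pow, one_mul]; exact hS
  · rw [hk.neg_one_pow, neg_one_mul]; exact qOnly_neg hS

/-- coefficient of a term vanishes off its `x`-degree -/
lemma coeff_term_ne (n : ℕ × ℕ × ℕ) (a b : ℕ) (h : NN n ≠ a) :
    MvPowerSeries.coeff (dd a b) (term n) = 0 := by
  have : term n = Xx ^ (NN n) * Qq ^ (EE n) * ((-1 : Mv) ^ n.2.2 * (den n)⁻¹) := by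
    rw [term]; ring
  rw [this, Hmul]
  split_ifs with hc
  · apply qOnly_smul_sign
    · exact qOnly_den_inv n
    · rw [dd_apply0]
      omega
  · rfl

/-! ### termwise shift lemmas -/

lemma T1 (n1 n2 n3 : ℕ) :
    term (n1 + 1, n2, n3) * (1 - Qq ^ (2 * n1 + 2))
      = term (n1, n2, n3) * (Xx * Qq ^ (4 * n1 + 2 * n2 + 6 * n3 + 1)) := by
  have hE : EE (n1 + 1, n2, n3) = EE (n1, n2, n3) + (4 * n1 + 2 * n2 + 6 * n3 + 1) := by
    simp only [EE, Nat.choose_succ_succ, Nat.choose_one_right]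
    ring
  have hN : NN (n1 + 1, n2, n3) = NN (n1, n2, n3) + 1 := by simp only [NN]; omega
  have hden : den (n1 + 1, n2, n3) = den (n1, n2, n3) * (1 - Qq ^ (2 * n1 + 2)) := by
    rw [den, den, poch_succ 2 n1 (by omega)]
    ring_nf
  rw [term, term, hE, hN, hden]
  rw [show ((-1:Mv) ^ n3 * Xx ^ (NN (n1, n2, n3) + 1)
      * Qq ^ (EE (n1, n2, n3) + (4 * n1 + 2 * n2 + 6 * n3 + 1))
      * (den (n1, n2, n3) * (1 - Qq ^ (2 * n1 + 2)))⁻¹ * (1 - Qq ^ (2 * n1 + 2)))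
      = ((-1:Mv) ^ n3 * Xx ^ (NN (n1, n2, n3) + 1)
      * Qq ^ (EE (n1, n2, n3) + (4 * n1 + 2 * n2 + 6 * n3 + 1))
      * ((den (n1, n2, n3) * (1 - Qq ^ (2 * n1 + 2)))⁻¹ * (1 - Qq ^ (2 * n1 + 2)))) by ring]
  rw [inv_mul_eq (constCoeff_den_ne _) (by rw [constCoeff_one_sub_Qq_pow _ (by omega)]; exact one_ne_zero)]
  rw [pow_add, pow_add]
  ring


lemma T2 (n1 n2 n3 : ℕ) :
    term (n1, n2 + 1, n3) * (1 - Qq ^ (2 * n2 + 2))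
      = term (n1, n2, n3) * (Xx ^ 2 * Qq ^ (2 * n1 + 4 * n2 + 6 * n3 + 2)) := by
  have hE : EE (n1, n2 + 1, n3) = EE (n1, n2, n3) + (2 * n1 + 4 * n2 + 6 * n3 + 2) := by
    simp only [EE, Nat.choose_succ_succ, Nat.choose_one_right]
    ring
  have hN : NN (n1, n2 + 1, n3) = NN (n1, n2, n3) + 2 := by simp only [NN]; omega
  have hden : den (n1, n2 + 1, n3) = den (n1, n2, n3) * (1 - Qq ^ (2 * n2 + 2)) := by
    rw [den, den, poch_succ 2 n2 (by omega)]
    ring_nf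
  rw [term, term, hE, hN, hden]
  rw [show ((-1:Mv) ^ n3 * Xx ^ (NN (n1, n2, n3) + 2)
      * Qq ^ (EE (n1, n2, n3) + (2 * n1 + 4 * n2 + 6 * n3 + 2))
      * (den (n1, n2, n3) * (1 - Qq ^ (2 * n2 + 2)))⁻¹ * (1 - Qq ^ (2 * n2 + 2)))
      = ((-1:Mv) ^ n3 * Xx ^ (NN (n1, n2, n3) + 2)
      * Qq ^ (EE (n1, n2, n3) + (2 * n1 + 4 * n2 + 6 * n3 + 2))
      * ((den (n1, n2, n3) * (1 - Qq ^ (2 * n2 + 2)))⁻¹ * (1 - Qq ^ (2 * n2 + 2)))) by ring]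
  rw [inv_mul_eq (constCoeff_den_ne _) (by rw [constCoeff_one_sub_Qq_pow _ (by omega)]; exact one_ne_zero)]
  rw [pow_add, pow_add]
  ring

lemma T3 (n1 n2 n3 : ℕ) :
    term (n1, n2, n3 + 1) * (1 - Qq ^ (6 * n3 + 6))
      = -(term (n1, n2, n3) * (Xx ^ 3 * Qq ^ (6 * n1 + 6 * n2 + 18 * n3 + 9))) := by
  have hE : EE (n1, n2, n3 + 1) = EE (n1, n2, n3) + (6 * n1 + 6 * n2 + 18 * n3 + 9) := by
    simp only [EE, Nat.choose_succ_succ, Nat.choose_one_right]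
    ring
  have hN : NN (n1, n2, n3 + 1) = NN (n1, n2, n3) + 3 := by simp only [NN]; omega
  have hden : den (n1, n2, n3 + 1) = den (n1, n2, n3) * (1 - Qq ^ (6 * n3 + 6)) := by
    rw [den, den, poch_succ 6 n3 (by omega)]
    ring_nf
  rw [term, term, hE, hN, hden]
  rw [show ((-1:Mv) ^ (n3+1) * Xx ^ (NN (n1, n2, n3) + 3)
      * Qq ^ (EE (n1, n2, n3) + (6 * n1 + 6 * n2 + 18 * n3 + 9))
      * (den (n1, n2, n3) * (1 - Qq ^ (6 * n3 + 6)))⁻¹ * (1 - Qq ^ (6 * n3 + 6)))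
      = ((-1:Mv) ^ (n3+1) * Xx ^ (NN (n1, n2, n3) + 3)
      * Qq ^ (EE (n1, n2, n3) + (6 * n1 + 6 * n2 + 18 * n3 + 9))
      * ((den (n1, n2, n3) * (1 - Qq ^ (6 * n3 + 6)))⁻¹ * (1 - Qq ^ (6 * n3 + 6)))) by ring]
  rw [inv_mul_eq (constCoeff_den_ne _) (by rw [constCoeff_one_sub_Qq_pow _ (by omega)]; exact one_ne_zero)]
  rw [pow_add, pow_add, pow_succ]
  ring


/-! ### the constrained index sets and weighted sums -/

def Tset (M : ℤ) : Finset (ℕ × ℕ × ℕ) :=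
  (Finset.range (M.toNat + 1) ×ˢ Finset.range (M.toNat + 1) ×ˢ Finset.range (M.toNat + 1)).filter
    (fun n => (n.1 : ℤ) + 2 * n.2.1 + 3 * n.2.2 = M)

lemma mem_Tset {M : ℤ} {n : ℕ × ℕ × ℕ} :
    n ∈ Tset M ↔ (n.1 : ℤ) + 2 * n.2.1 + 3 * n.2.2 = M := by
  constructor
  · intro h
    exact (Finset.mem_filter.1 h).2
  · intro h
    rw [Tset, Finset.mem_filter]
    refine ⟨?_, h⟩
    rw [Finset.mem_product, Finset.mem_product]
    refine ⟨?_, ?_, ?_⟩ <;> rw [Finset.mem_range] <;> omega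

lemma Tset_neg {M : ℤ} (h : M < 0) : Tset M = ∅ := by
  ext n
  simp only [mem_Tset, Finset.notMem_empty, iff_false]
  omega

/-- weighted sums -/
def U (M : ℤ) (A B C p : ℕ) : Mv :=
  ∑ n ∈ Tset M, term n * Qq ^ (A * n.1 + B * n.2.1 + C * n.2.2 + p)

lemma U_neg {M : ℤ} (h : M < 0) (A B C p : ℕ) : U M A B C p = 0 := by
  rw [U, Tset_neg h, Finset.sum_empty]

/-- pull a constant power of `q` out -/
lemma U_const (M : ℤ) (A B C p δ : ℕ) : U M A B C (p + δ) = Qq ^ δ * U M A B C p := by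
  rw [U, U, Finset.mul_sum]
  apply Finset.sum_congr rfl
  intro n _
  rw [show A * n.1 + B * n.2.1 + C * n.2.2 + (p + δ)
      = δ + (A * n.1 + B * n.2.1 + C * n.2.2 + p) by ring, pow_add]
  ring

/-! ### the three summation rules -/

lemma R1 (M : ℤ) (A B C p : ℕ) :
    U M A B C p - U M (A + 2) B C p
      = Xx * U (M - 1) (A + 4) (B + 2) (C + 6) (p + A + 1) := by
  rw [U, U, U, ← Finset.sum_sub_distrib, Finset.mul_sum]
  rw [← Finset.sum_filter_of_ne (s := Tset M)
      (p := fun n => n.1 ≠ 0)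
      (f := fun n => term n * Qq ^ (A * n.1 + B * n.2.1 + C * n.2.2 + p)
        - term n * Qq ^ ((A + 2) * n.1 + B * n.2.1 + C * n.2.2 + p))
      (by
        rintro ⟨n1, n2, n3⟩ _ hne
        by_contra h0
        apply hne
        simp only at h0
        subst h0
        simp only [mul_zero, zero_add]
        rw [sub_self])]
  apply Finset.sum_nbij' (i := fun n => (n.1 - 1, n.2.1, n.2.2))
    (j := fun m => (m.1 + 1, m.2.1, m.2.2))
  · rintro ⟨n1, n2, n3⟩ hn
    rw [Finset.mem_filter, mem_Tset] at hn
    rw [mem_Tset]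
    dsimp only at hn ⊢
    omega
  · rintro ⟨m1, m2, m3⟩ hm
    rw [mem_Tset] at hm
    rw [Finset.mem_filter, mem_Tset]
    dsimp only at hm ⊢
    omega
  · rintro ⟨n1, n2, n3⟩ hn
    rw [Finset.mem_filter] at hn
    simp only at hn ⊢
    rw [Nat.sub_add_cancel (by omega)]
  · rintro ⟨m1, m2, m3⟩ _
    simp
  · rintro ⟨n1, n2, n3⟩ hn
    rw [Finset.mem_filter, mem_Tset] at hn
    obtain ⟨h1, h2⟩ := hn
    dsimp only at h1 h2
    simp only
    obtain ⟨m1, rfl⟩ : ∃ m1, n1 = m1 + 1 := ⟨n1 - 1, by omega⟩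
    simp only [Nat.add_sub_cancel]
    have hfac : term (m1 + 1, n2, n3) * Qq ^ (A * (m1 + 1) + B * n2 + C * n3 + p)
        - term (m1 + 1, n2, n3) * Qq ^ ((A + 2) * (m1 + 1) + B * n2 + C * n3 + p)
        = (term (m1 + 1, n2, n3) * (1 - Qq ^ (2 * m1 + 2)))
            * Qq ^ (A * (m1 + 1) + B * n2 + C * n3 + p) := by
      rw [show (A + 2) * (m1 + 1) + B * n2 + C * n3 + p
          = (A * (m1 + 1) + B * n2 + C * n3 + p) + (2 * m1 + 2) by ring, pow_add]
      ring
    rw [hfac, T1]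
    rw [show (A + 4) * m1 + (B + 2) * n2 + (C + 6) * n3 + (p + A + 1)
        = (4 * m1 + 2 * n2 + 6 * n3 + 1) + (A * (m1 + 1) + B * n2 + C * n3 + p) by ring, pow_add]
    ring


lemma R2 (M : ℤ) (A B C p : ℕ) :
    U M A B C p - U M A (B + 2) C p
      = Xx ^ 2 * U (M - 2) (A + 2) (B + 4) (C + 6) (p + B + 2) := by
  rw [U, U, U, ← Finset.sum_sub_distrib, Finset.mul_sum]
  rw [← Finset.sum_filter_of_ne (s := Tset M)
      (p := fun n => n.2.1 ≠ 0)
      (f := fun n => term n * Qq ^ (A * n.1 + B * n.2.1 + C * n.2.2 + p)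
        - term n * Qq ^ (A * n.1 + (B + 2) * n.2.1 + C * n.2.2 + p))
      (by
        rintro ⟨n1, n2, n3⟩ _ hne
        by_contra h0
        apply hne
        simp only at h0
        subst h0
        simp only [mul_zero, zero_add]
        rw [sub_self])]
  apply Finset.sum_nbij' (i := fun n => (n.1, n.2.1 - 1, n.2.2))
    (j := fun m => (m.1, m.2.1 + 1, m.2.2))
  · rintro ⟨n1, n2, n3⟩ hn
    rw [Finset.mem_filter, mem_Tset] at hn
    rw [mem_Tset]
    dsimp only at hn ⊢
    omega
  · rintro ⟨m1, m2, m3⟩ hm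
    rw [mem_Tset] at hm
    rw [Finset.mem_filter, mem_Tset]
    dsimp only at hm ⊢
    omega
  · rintro ⟨n1, n2, n3⟩ hn
    rw [Finset.mem_filter] at hn
    simp only at hn ⊢
    rw [Nat.sub_add_cancel (by omega)]
  · rintro ⟨m1, m2, m3⟩ _
    simp
  · rintro ⟨n1, n2, n3⟩ hn
    rw [Finset.mem_filter, mem_Tset] at hn
    obtain ⟨h1, h2⟩ := hn
    dsimp only at h1 h2
    simp only
    obtain ⟨m2, rfl⟩ : ∃ m2, n2 = m2 + 1 := ⟨n2 - 1, by omega⟩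
    simp only [Nat.add_sub_cancel]
    have hfac : term (n1, m2 + 1, n3) * Qq ^ (A * n1 + B * (m2 + 1) + C * n3 + p)
        - term (n1, m2 + 1, n3) * Qq ^ (A * n1 + (B + 2) * (m2 + 1) + C * n3 + p)
        = (term (n1, m2 + 1, n3) * (1 - Qq ^ (2 * m2 + 2)))
            * Qq ^ (A * n1 + B * (m2 + 1) + C * n3 + p) := by
      rw [show A * n1 + (B + 2) * (m2 + 1) + C * n3 + p
          = (A * n1 + B * (m2 + 1) + C * n3 + p) + (2 * m2 + 2) by ring, pow_add]
      ring
    rw [hfac, T2]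
    rw [show (A + 2) * n1 + (B + 4) * m2 + (C + 6) * n3 + (p + B + 2)
        = (2 * n1 + 4 * m2 + 6 * n3 + 2) + (A * n1 + B * (m2 + 1) + C * n3 + p) by ring, pow_add]
    ring

lemma R3 (M : ℤ) (A B C p : ℕ) :
    U M A B C p - U M A B (C + 6) p
      = -(Xx ^ 3 * U (M - 3) (A + 6) (B + 6) (C + 18) (p + C + 9)) := by
  rw [U, U, U, ← Finset.sum_sub_distrib, Finset.mul_sum, ← Finset.sum_neg_distrib]
  rw [← Finset.sum_filter_of_ne (s := Tset M)
      (p := fun n => n.2.2 ≠ 0)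
      (f := fun n => term n * Qq ^ (A * n.1 + B * n.2.1 + C * n.2.2 + p)
        - term n * Qq ^ (A * n.1 + B * n.2.1 + (C + 6) * n.2.2 + p))
      (by
        rintro ⟨n1, n2, n3⟩ _ hne
        by_contra h0
        apply hne
        simp only at h0
        subst h0
        simp only [mul_zero, zero_add]
        rw [sub_self])]
  apply Finset.sum_nbij' (i := fun n => (n.1, n.2.1, n.2.2 - 1))
    (j := fun m => (m.1, m.2.1, m.2.2 + 1))
  · rintro ⟨n1, n2, n3⟩ hn
    rw [Finset.mem_filter, mem_Tset] at hn
    rw [mem_Tset]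
    dsimp only at hn ⊢
    omega
  · rintro ⟨m1, m2, m3⟩ hm
    rw [mem_Tset] at hm
    rw [Finset.mem_filter, mem_Tset]
    dsimp only at hm ⊢
    omega
  · rintro ⟨n1, n2, n3⟩ hn
    rw [Finset.mem_filter] at hn
    simp only at hn ⊢
    rw [Nat.sub_add_cancel (by omega)]
  · rintro ⟨m1, m2, m3⟩ _
    simp
  · rintro ⟨n1, n2, n3⟩ hn
    rw [Finset.mem_filter, mem_Tset] at hn
    obtain ⟨h1, h2⟩ := hn
    dsimp only at h1 h2
    simp only
    obtain ⟨m3, rfl⟩ : ∃ m3, n3 = m3 + 1 := ⟨n3 - 1, by omega⟩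
    simp only [Nat.add_sub_cancel]
    have hfac : term (n1, n2, m3 + 1) * Qq ^ (A * n1 + B * n2 + C * (m3 + 1) + p)
        - term (n1, n2, m3 + 1) * Qq ^ (A * n1 + B * n2 + (C + 6) * (m3 + 1) + p)
        = (term (n1, n2, m3 + 1) * (1 - Qq ^ (6 * m3 + 6)))
            * Qq ^ (A * n1 + B * n2 + C * (m3 + 1) + p) := by
      rw [show A * n1 + B * n2 + (C + 6) * (m3 + 1) + p
          = (A * n1 + B * n2 + C * (m3 + 1) + p) + (6 * m3 + 6) by ring, pow_add]
      ring
    rw [hfac, T3]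
    rw [show (A + 6) * n1 + (B + 6) * n2 + (C + 18) * m3 + (p + C + 9)
        = (6 * n1 + 6 * n2 + 18 * m3 + 9) + (A * n1 + B * n2 + C * (m3 + 1) + p) by ring, pow_add]
    ring


lemma Tset_zero : Tset 0 = {(0, 0, 0)} := by
  ext ⟨n1, n2, n3⟩
  simp only [mem_Tset, Finset.mem_singleton, Prod.mk.injEq]
  constructor
  · intro h
    refine ⟨?_, ?_, ?_⟩ <;> omega
  · rintro ⟨rfl, rfl, rfl⟩
    simp

lemma term_zero : term (0, 0, 0) = 1 := by
  rw [term, NN, EE, den]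
  norm_num [poch]

lemma U_zero (A B C p : ℕ) : U 0 A B C p = Qq ^ p := by
  rw [U, Tset_zero, Finset.sum_singleton, term_zero]
  norm_num

/-- The key telescoping family. -/
lemma Jgen : ∀ (K : ℕ) (j : ℕ) (M : ℤ), M ≤ K →
    U M (4+6*j) (6+6*j) (6+12*j) 0 - U M (6+6*j) (6+6*j) (12+12*j) 0
      = Xx * U (M-1) (8+6*j) (10+6*j) (18+12*j) (5+6*j) := by
  intro K
  induction K with
  | zero =>
      intro j M hM
      rcases lt_or_eq_of_le hM with h | h
      · rw [U_neg (by omega), U_neg (by omega), U_neg (by omega), sub_self, mul_zero]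
      · subst h
        simp only [Nat.cast_zero]
        rw [U_zero, U_zero, U_neg (by omega), sub_self, mul_zero]
  | succ K IH =>
      intro j M hM
      by_cases hMK : M ≤ K
      · exact IH j M hMK
      -- main step
      have h1 := R1 M (4+6*j) (6+6*j) (6+12*j) 0
      rw [show 4+6*j+2 = 6+6*j by omega, show 4+6*j+4 = 8+6*j by omega,
        show 6+6*j+2 = 8+6*j by omega, show 6+12*j+6 = 12+12*j by omega,
        show 0+(4+6*j)+1 = 5+6*j by omega] at h1
      have h2 := R3 M (6+6*j) (6+6*j) (6+12*j) 0
      rw [show 6+12*j+6 = 12+12*j by omega, show 6+6*j+6 = 12+6*j by omega,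
        show 6+12*j+18 = 24+12*j by omega, show 0+(6+12*j)+9 = 15+12*j by omega] at h2
      have h3 := R2 (M-1) (8+6*j) (8+6*j) (12+12*j) (5+6*j)
      rw [show 8+6*j+2 = 10+6*j by omega, show 8+6*j+4 = 12+6*j by omega,
        show 12+12*j+6 = 18+12*j by omega, show (5+6*j)+(8+6*j)+2 = 15+12*j by omega,
        show M-1-2 = M-3 by ring] at h3
      have h4 := R3 (M-1) (8+6*j) (10+6*j) (12+12*j) (5+6*j)
      rw [show 12+12*j+6 = 18+12*j by omega, show 8+6*j+6 = 14+6*j by omega,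
        show 10+6*j+6 = 16+6*j by omega, show 12+12*j+18 = 30+12*j by omega,
        show (5+6*j)+(12+12*j)+9 = 26+18*j by omega, show M-1-3 = M-4 by ring] at h4
      have hIH := IH (j+1) (M-3) (by omega)
      rw [show 4+6*(j+1) = 10+6*j by omega, show 6+6*(j+1) = 12+6*j by omega,
        show 6+12*(j+1) = 18+12*j by omega, show 12+12*(j+1) = 24+12*j by omega,
        show 8+6*(j+1) = 14+6*j by omega, show 10+6*(j+1) = 16+6*j by omega,
        show 18+12*(j+1) = 30+12*j by omega, show 5+6*(j+1) = 11+6*j by omega,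
        show M-3-1 = M-4 by ring] at hIH
      have hc1 := U_const (M-3) (10+6*j) (12+6*j) (18+12*j) 0 (15+12*j)
      rw [show 0+(15+12*j) = 15+12*j by omega] at hc1
      have hc2 := U_const (M-3) (12+6*j) (12+6*j) (24+12*j) 0 (15+12*j)
      rw [show 0+(15+12*j) = 15+12*j by omega] at hc2
      have hc3 := U_const (M-4) (14+6*j) (16+6*j) (30+12*j) (11+6*j) (15+12*j)
      rw [show (11+6*j)+(15+12*j) = 26+18*j by omega] at hc3
      linear_combination h1 + h2 + Xx*h3 + Xx*h4 + Xx^3*Qq^(15+12*j)*hIH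
        + Xx^3*hc1 - Xx^3*hc2 - Xx^4*hc3

/-- The master recurrence for the sum side. -/
lemma REC (N : ℤ) : U N 0 0 0 0
    = U N 2 4 6 0 + Xx * U (N-1) 2 4 6 1 + Xx^2 * U (N-2) 2 4 6 2 := by
  have a1 := R2 N 0 0 0 0
  norm_num at a1
  have a2 := R1 N 0 2 0 0
  norm_num at a2
  have a3 := R2 N 2 2 0 0
  norm_num at a3
  have a4 := R3 N 2 4 0 0
  norm_num at a4
  have a5 := R1 (N-1) 2 4 6 1
  rw [show (N:ℤ)-1-1 = N-2 by ring] at a5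
  norm_num at a5
  have a6 := Jgen (N.toNat) 0 (N-2) (by omega)
  norm_num at a6
  rw [show (N:ℤ)-2-1 = N-3 by ring] at a6
  have hc1 := U_const (N-2) 4 6 6 0 4
  norm_num at hc1
  have hc2 := U_const (N-2) 6 6 12 0 4
  norm_num at hc2
  have hc3 := U_const (N-3) 8 10 18 5 4
  norm_num at hc3
  linear_combination a1 + a2 + a3 + a4 - Xx*a5 + Xx^2*Qq^4*a6
    + Xx^2*hc1 - Xx^2*hc2 - Xx^3*hc3


/-! ### coefficient extraction -/

lemma HmulQ (j : ℕ) (W : Mv) (a b : ℕ) :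
    MvPowerSeries.coeff (dd a b) (Qq ^ j * W)
      = if j ≤ b then MvPowerSeries.coeff (dd a (b - j)) W else 0 := by
  have h := Hmul 0 j W a b
  rw [pow_zero, one_mul] at h
  rw [h]
  split_ifs with h1 h2 h2 <;> first
    | rfl
    | (exfalso; omega)
    | (rw [Nat.sub_zero])
    | (exact absurd ⟨Nat.zero_le a, h2⟩ h1)

lemma Udiag (N : ℕ) (c : ℕ) :
    U (N : ℤ) 2 4 6 c = Qq ^ (2 * N + c) * U (N : ℤ) 0 0 0 0 := by
  rw [U, U, Finset.mul_sum]
  apply Finset.sum_congr rfl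
  rintro ⟨n1, n2, n3⟩ hn
  rw [mem_Tset] at hn
  dsimp only at hn ⊢
  have he : 2 * n1 + 4 * n2 + 6 * n3 + c = (2 * N + c) + (0 * n1 + 0 * n2 + 0 * n3 + 0) := by
    omega
  rw [he, pow_add]
  ring

def gam (a b : ℕ) : ℚ := MvPowerSeries.coeff (dd a b) (U (a : ℤ) 0 0 0 0)

lemma ite2 (a b : ℕ) (ha : 1 ≤ a) :
    (if 1 ≤ a ∧ 2*a-1 ≤ b then
        MvPowerSeries.coeff (dd (a-1) (b - (2*a-1))) (U ((a-1:ℕ):ℤ) 0 0 0 0) else 0)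
      = (if 2*a ≤ b+1 then gam (a-1) (b+1-2*a) else 0) := by
  by_cases h : 2*a ≤ b+1
  · rw [if_pos ⟨ha, by omega⟩, if_pos h, show b - (2*a-1) = b+1-2*a by omega]
    rfl
  · rw [if_neg (by rintro ⟨_, hh⟩; omega), if_neg h]

lemma ite3 (a b : ℕ) :
    (if 2 ≤ a ∧ 2*a-2 ≤ b then
        MvPowerSeries.coeff (dd (a-2) (b - (2*a-2))) (U ((a-2:ℕ):ℤ) 0 0 0 0) else 0)
      = (if 2 ≤ a ∧ 2*a ≤ b+2 then gam (a-2) (b+2-2*a) else 0) := by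
  by_cases h2 : 2 ≤ a
  · by_cases h : 2*a ≤ b+2
    · rw [if_pos ⟨h2, by omega⟩, if_pos ⟨h2, h⟩, show b - (2*a-2) = b+2-2*a by omega]
      rfl
    · rw [if_neg (by rintro ⟨_, hh⟩; omega), if_neg (by rintro ⟨_, hh⟩; omega)]
  · rw [if_neg (by rintro ⟨hh, _⟩; omega), if_neg (by rintro ⟨hh, _⟩; omega)]

lemma gam_rec (a b : ℕ) (ha : 1 ≤ a) :
    gam a b = (if 2*a ≤ b then gam a (b - 2*a) else 0)
      + (if 2*a ≤ b + 1 then gam (a-1) (b + 1 - 2*a) else 0)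
      + (if 2 ≤ a ∧ 2*a ≤ b + 2 then gam (a-2) (b + 2 - 2*a) else 0) := by
  have hrec := REC (a : ℤ)
  have e1 : U (a:ℤ) 2 4 6 0 = Qq ^ (2*a) * U (a:ℤ) 0 0 0 0 := by
    have := Udiag a 0
    rwa [Nat.add_zero] at this
  have e2 : U ((a:ℤ)-1) 2 4 6 1 = Qq ^ (2*a-1) * U ((a-1 : ℕ) : ℤ) 0 0 0 0 := by
    rw [show (a:ℤ)-1 = ((a-1 : ℕ) : ℤ) by omega, Udiag]
    congr 1
    congr 1
    omega
  have hcoeff := congrArg (MvPowerSeries.coeff (dd a b)) hrec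
  rw [e1, e2, map_add, map_add] at hcoeff
  rw [HmulQ] at hcoeff
  rw [show Xx * (Qq ^ (2*a-1) * U ((a-1 : ℕ) : ℤ) 0 0 0 0)
      = Xx^1 * Qq ^ (2*a-1) * U ((a-1 : ℕ) : ℤ) 0 0 0 0 by ring, Hmul] at hcoeff
  by_cases ha2 : 2 ≤ a
  · have e3 : U ((a:ℤ)-2) 2 4 6 2 = Qq ^ (2*a-2) * U ((a-2 : ℕ) : ℤ) 0 0 0 0 := by
      rw [show (a:ℤ)-2 = ((a-2 : ℕ) : ℤ) by omega, Udiag]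
      congr 1
      congr 1
      omega
    rw [e3, show Xx^2 * (Qq ^ (2*a-2) * U ((a-2 : ℕ) : ℤ) 0 0 0 0)
        = Xx^2 * Qq ^ (2*a-2) * U ((a-2 : ℕ) : ℤ) 0 0 0 0 by ring, Hmul] at hcoeff
    rw [gam, hcoeff, ite2 a b ha, ite3 a b]
    rfl
  · rw [show Xx^2 * U ((a:ℤ)-2) 2 4 6 2 = Xx^2 * U ((a:ℤ)-2) 2 4 6 2 from rfl,
      U_neg (show (a:ℤ)-2 < 0 by omega), mul_zero, map_zero, add_zero] at hcoeff
    rw [gam, hcoeff, ite2 a b ha,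
      if_neg (show ¬(2 ≤ a ∧ 2*a ≤ b+2) by rintro ⟨hh, _⟩; omega), add_zero]
    rfl


/-! ### the product side -/

def Ff (n : ℕ) : Mv := 1 + Xx * Qq ^ (2 * n + 1) + Xx ^ 2 * Qq ^ (4 * n + 2)

def Pprod (M : ℕ) : Mv := ∏ n ∈ Finset.range M, Ff n

lemma dd_eq_zero_iff (a b : ℕ) : dd a b = 0 ↔ a = 0 ∧ b = 0 := by
  constructor
  · intro h
    constructor
    · have := congrArg (fun d => d 0) h
      simpa [dd] using this
    · have := congrArg (fun d => d 1) h
      simpa [dd] using this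
  · rintro ⟨rfl, rfl⟩
    simp [dd]

lemma coeff_one' (a b : ℕ) :
    MvPowerSeries.coeff (dd a b) (1 : Mv) = if a = 0 ∧ b = 0 then 1 else 0 := by
  rw [MvPowerSeries.coeff_one]
  split_ifs with h1 h2 h2 <;> try rfl
  · exact absurd ((dd_eq_zero_iff a b).1 h1) h2
  · exact absurd ((dd_eq_zero_iff a b).2 h2) h1

lemma coeff_mul_Ff (G : Mv) (n a b : ℕ) :
    MvPowerSeries.coeff (dd a b) (G * Ff n)
      = MvPowerSeries.coeff (dd a b) G
        + (if 1 ≤ a ∧ 2*n+1 ≤ b then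
            MvPowerSeries.coeff (dd (a-1) (b-(2*n+1))) G else 0)
        + (if 2 ≤ a ∧ 4*n+2 ≤ b then
            MvPowerSeries.coeff (dd (a-2) (b-(4*n+2))) G else 0) := by
  rw [Ff, mul_add, mul_add, mul_one, map_add, map_add]
  congr 1
  congr 1
  · rw [show G * (Xx * Qq ^ (2*n+1)) = Xx^1 * Qq ^ (2*n+1) * G by ring, Hmul]
  · rw [show G * (Xx^2 * Qq ^ (4*n+2)) = Xx^2 * Qq ^ (4*n+2) * G by ring, Hmul]

lemma ite_ite (P Q : Prop) [Decidable P] [Decidable Q] (x : ℚ) :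
    (if P then (if Q then x else 0) else 0) = if P ∧ Q then x else 0 := by
  split_ifs <;> tauto

lemma ite_add3 (P : Prop) [Decidable P] (x y z : ℚ) :
    (if P then (x+y+z) else 0) = (if P then x else 0)+(if P then y else 0)+(if P then z else 0) := by
  split_ifs <;> simp

lemma iteguard (P1 P2 : Prop) [Decidable P1] [Decidable P2] (x y : ℚ)
    (hiff : P1 ↔ P2) (hval : P1 → P2 → x = y) :
    (if P1 then x else 0) = (if P2 then y else 0) := by
  split_ifs with h1 h2 h3
  · exact hval h1 h2
  · exact absurd (hiff.1 h1) h2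
  · exact absurd (hiff.2 h3) h1
  · rfl

/-- coefficient of the index-shifted product -/
lemma ClaimA (M a b : ℕ) :
    MvPowerSeries.coeff (dd a b) (∏ n ∈ Finset.range M, Ff (n+1))
      = if 2*a ≤ b then MvPowerSeries.coeff (dd a (b-2*a)) (Pprod M) else 0 := by
  induction M generalizing a b with
  | zero =>
      rw [Finset.range_zero, Finset.prod_empty, Pprod, Finset.range_zero, Finset.prod_empty,
        coeff_one']
      rw [show (if 2*a ≤ b then MvPowerSeries.coeff (dd a (b-2*a)) (1:Mv) else 0)
          = if 2*a ≤ b then (if a = 0 ∧ b-2*a = 0 then (1:ℚ) else 0) else 0 by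
        rw [coeff_one']]
      rw [ite_ite]
      split_ifs with h1 h2 h2 <;> first | rfl | omega
  | succ M IH =>
      rw [Finset.prod_range_succ, coeff_mul_Ff, IH]
      rw [show (if 1 ≤ a ∧ 2*(M+1)+1 ≤ b then
            MvPowerSeries.coeff (dd (a-1) (b-(2*(M+1)+1))) (∏ n ∈ Finset.range M, Ff (n+1)) else 0)
          = if 1 ≤ a ∧ 2*(M+1)+1 ≤ b then
            (if 2*(a-1) ≤ b-(2*(M+1)+1) then
              MvPowerSeries.coeff (dd (a-1) (b-(2*(M+1)+1)-2*(a-1))) (Pprod M) else 0) else 0 by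
        by_cases h : 1 ≤ a ∧ 2*(M+1)+1 ≤ b
        · rw [if_pos h, if_pos h, IH]
        · rw [if_neg h, if_neg h]]
      rw [show (if 2 ≤ a ∧ 4*(M+1)+2 ≤ b then
            MvPowerSeries.coeff (dd (a-2) (b-(4*(M+1)+2))) (∏ n ∈ Finset.range M, Ff (n+1)) else 0)
          = if 2 ≤ a ∧ 4*(M+1)+2 ≤ b then
            (if 2*(a-2) ≤ b-(4*(M+1)+2) then
              MvPowerSeries.coeff (dd (a-2) (b-(4*(M+1)+2)-2*(a-2))) (Pprod M) else 0) else 0 by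
        by_cases h : 2 ≤ a ∧ 4*(M+1)+2 ≤ b
        · rw [if_pos h, if_pos h, IH]
        · rw [if_neg h, if_neg h]]
      rw [ite_ite, ite_ite]
      rw [show Pprod (M+1) = Pprod M * Ff M from Finset.prod_range_succ Ff M]
      rw [show (if 2*a ≤ b then MvPowerSeries.coeff (dd a (b-2*a)) (Pprod M * Ff M) else 0)
          = if 2*a ≤ b then
              (MvPowerSeries.coeff (dd a (b-2*a)) (Pprod M)
              + (if 1 ≤ a ∧ 2*M+1 ≤ b-2*a then
                  MvPowerSeries.coeff (dd (a-1) (b-2*a-(2*M+1))) (Pprod M) else 0)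
              + (if 2 ≤ a ∧ 4*M+2 ≤ b-2*a then
                  MvPowerSeries.coeff (dd (a-2) (b-2*a-(4*M+2))) (Pprod M) else 0)) else 0 by
        by_cases h : 2*a ≤ b
        · rw [if_pos h, if_pos h, coeff_mul_Ff]
        · rw [if_neg h, if_neg h]]
      rw [ite_add3, ite_ite, ite_ite]
      congr 1
      congr 1
      · apply iteguard
        · constructor
          · rintro ⟨⟨h1, h2⟩, h3⟩
            exact ⟨by omega, h1, by omega⟩
          · rintro ⟨h1, h2, h3⟩
            exact ⟨⟨h2, by omega⟩, by omega⟩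
        · intro h1 h2
          rw [show b-(2*(M+1)+1)-2*(a-1) = b-2*a-(2*M+1) by omega]
      · apply iteguard
        · constructor
          · rintro ⟨⟨h1, h2⟩, h3⟩
            exact ⟨by omega, h1, by omega⟩
          · rintro ⟨h1, h2, h3⟩
            exact ⟨⟨h2, by omega⟩, by omega⟩
        · intro h1 h2
          rw [show b-(4*(M+1)+2)-2*(a-2) = b-2*a-(4*M+2) by omega]


def lam (a b : ℕ) : ℚ := MvPowerSeries.coeff (dd a b) (Pprod (b+1))

lemma stab (a b M : ℕ) (h : b + 1 ≤ M) :
    MvPowerSeries.coeff (dd a b) (Pprod M) = lam a b := by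
  induction M, h using Nat.le_induction with
  | base => rfl
  | succ M hM IH =>
      rw [show Pprod (M+1) = Pprod M * Ff M from Finset.prod_range_succ Ff M, coeff_mul_Ff,
        if_neg (by rintro ⟨_, hh⟩; omega), if_neg (by rintro ⟨_, hh⟩; omega), add_zero, add_zero,
        IH]

lemma extr (a b : ℕ) (t : Finset ℕ) : ∀ (A : Mv), (∀ n ∈ t, b + 1 ≤ n) →
    MvPowerSeries.coeff (dd a b) (A * ∏ n ∈ t, Ff n) = MvPowerSeries.coeff (dd a b) A := by
  classical
  induction t using Finset.induction_on with
  | empty => intro A _; simp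
  | @insert c t' hc IH =>
      intro A ht
      rw [Finset.prod_insert hc, show A * (Ff c * ∏ n ∈ t', Ff n) = (A * Ff c) * ∏ n ∈ t', Ff n
        by ring, IH (A * Ff c) (fun n hn => ht n (Finset.mem_insert_of_mem hn)), coeff_mul_Ff,
        if_neg (by rintro ⟨_, hh⟩; have := ht c (Finset.mem_insert_self c t'); omega),
        if_neg (by rintro ⟨_, hh⟩; have := ht c (Finset.mem_insert_self c t'); omega),
        add_zero, add_zero]

lemma sProd (a b : ℕ) (s : Finset ℕ) (hs : Finset.range (b+1) ⊆ s) :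
    MvPowerSeries.coeff (dd a b) (∏ n ∈ s, Ff n) = lam a b := by
  rw [← Finset.prod_sdiff hs, mul_comm]
  rw [extr a b (s \ Finset.range (b+1)) (∏ n ∈ Finset.range (b+1), Ff n) (by
    intro n hn
    rw [Finset.mem_sdiff, Finset.mem_range] at hn
    omega)]
  exact stab a b (b+1) le_rfl

lemma lam_zero (b : ℕ) : lam 0 b = if b = 0 then 1 else 0 := by
  have key : ∀ M, MvPowerSeries.coeff (dd 0 b) (Pprod M) = if b = 0 then 1 else 0 := by
    intro M
    induction M with
    | zero =>
        rw [Pprod, Finset.range_zero, Finset.prod_empty, coeff_one']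
        split_ifs <;> first | rfl | omega | tauto
    | succ M IH =>
        rw [show Pprod (M+1) = Pprod M * Ff M from Finset.prod_range_succ Ff M, coeff_mul_Ff,
          if_neg (by rintro ⟨hh, _⟩; omega), if_neg (by rintro ⟨hh, _⟩; omega),
          add_zero, add_zero, IH]
  exact key (b+1)

lemma gam_zero (b : ℕ) : gam 0 b = if b = 0 then 1 else 0 := by
  rw [gam, Nat.cast_zero, U_zero]
  rcases Nat.eq_zero_or_pos b with rfl | hb
  · rw [pow_zero, coeff_one']
    norm_num
  · rw [if_neg (by omega), Qq, MvPowerSeries.X_pow_eq, MvPowerSeries.coeff_monomial,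
      if_neg (by
        intro h
        have := congrArg (fun d => d 0) h
        simp [dd] at this
        have h1 := congrArg (fun d => d 1) h
        simp [dd] at h1
        omega)]

lemma lam_rec (a b : ℕ) (ha : 1 ≤ a) :
    lam a b = (if 2*a ≤ b then lam a (b - 2*a) else 0)
      + (if 2*a ≤ b + 1 then lam (a-1) (b + 1 - 2*a) else 0)
      + (if 2 ≤ a ∧ 2*a ≤ b + 2 then lam (a-2) (b + 2 - 2*a) else 0) := by
  have h0 : lam a b = MvPowerSeries.coeff (dd a b)
      ((∏ n ∈ Finset.range b, Ff (n+1)) * Ff 0) := by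
    rw [lam, Pprod, Finset.prod_range_succ']
  rw [h0, coeff_mul_Ff]
  congr 1
  congr 1
  · -- main term
    rw [ClaimA]
    by_cases h : 2*a ≤ b
    · rw [if_pos h, if_pos h, stab a (b - 2*a) b (by omega)]
    · rw [if_neg h, if_neg h]
  · -- second term
    rw [show (if 1 ≤ a ∧ 2*0+1 ≤ b then
          MvPowerSeries.coeff (dd (a-1) (b-(2*0+1))) (∏ n ∈ Finset.range b, Ff (n+1)) else 0)
        = if 1 ≤ a ∧ 2*0+1 ≤ b then
            (if 2*(a-1) ≤ b-(2*0+1) then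
              MvPowerSeries.coeff (dd (a-1) (b-(2*0+1)-2*(a-1))) (Pprod b) else 0) else 0 by
      by_cases h : 1 ≤ a ∧ 2*0+1 ≤ b
      · rw [if_pos h, if_pos h, ClaimA]
      · rw [if_neg h, if_neg h]]
    rw [ite_ite]
    apply iteguard
    · constructor
      · rintro ⟨⟨h1, h2⟩, h3⟩
        omega
      · intro h
        refine ⟨⟨ha, by omega⟩, by omega⟩
    · intro h1 h2
      rw [show b-(2*0+1)-2*(a-1) = b+1-2*a by omega, stab (a-1) (b+1-2*a) b (by omega)]
  · -- third term
    rw [show (if 2 ≤ a ∧ 4*0+2 ≤ b then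
          MvPowerSeries.coeff (dd (a-2) (b-(4*0+2))) (∏ n ∈ Finset.range b, Ff (n+1)) else 0)
        = if 2 ≤ a ∧ 4*0+2 ≤ b then
            (if 2*(a-2) ≤ b-(4*0+2) then
              MvPowerSeries.coeff (dd (a-2) (b-(4*0+2)-2*(a-2))) (Pprod b) else 0) else 0 by
      by_cases h : 2 ≤ a ∧ 4*0+2 ≤ b
      · rw [if_pos h, if_pos h, ClaimA]
      · rw [if_neg h, if_neg h]]
    rw [ite_ite]
    apply iteguard
    · constructor
      · rintro ⟨⟨h1, h2⟩, h3⟩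
        exact ⟨h1, by omega⟩
      · rintro ⟨h1, h2⟩
        exact ⟨⟨h1, by omega⟩, by omega⟩
    · intro h1 h2
      rw [show b-(4*0+2)-2*(a-2) = b+2-2*a by omega, stab (a-2) (b+2-2*a) b (by omega)]

lemma gam_eq_lam : ∀ a b, gam a b = lam a b := by
  intro a
  induction a using Nat.strong_induction_on with
  | _ a IHa =>
      intro b
      induction b using Nat.strong_induction_on with
      | _ b IHb =>
          rcases Nat.eq_zero_or_pos a with rfl | ha
          · rw [gam_zero, lam_zero]
          · rw [gam_rec a b ha, lam_rec a b ha]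
            congr 1
            congr 1
            · by_cases h : 2*a ≤ b
              · rw [if_pos h, if_pos h, IHb (b - 2*a) (by omega)]
              · rw [if_neg h, if_neg h]
            · by_cases h : 2*a ≤ b + 1
              · rw [if_pos h, if_pos h, IHa (a-1) (by omega)]
              · rw [if_neg h, if_neg h]
            · by_cases h : 2 ≤ a ∧ 2*a ≤ b + 2
              · rw [if_pos h, if_pos h, IHa (a-2) (by omega)]
              · rw [if_neg h, if_neg h]


/-! ### final assembly -/

def Lser : Mv := fun d => lam (d 0) (d 1)

lemma coeff_Lser (a b : ℕ) : MvPowerSeries.coeff (dd a b) Lser = lam a b := by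
  rw [MvPowerSeries.coeff_apply]
  show lam (dd a b 0) (dd a b 1) = lam a b
  rw [dd_apply0, dd_apply1]

lemma U00 (a : ℕ) : U (a:ℤ) 0 0 0 0 = ∑ n ∈ Tset (a:ℤ), term n := by
  rw [U]
  apply Finset.sum_congr rfl
  intro n _
  norm_num

lemma sSum (a b : ℕ) (s : Finset (ℕ × ℕ × ℕ)) (hs : Tset (a:ℤ) ⊆ s) :
    MvPowerSeries.coeff (dd a b) (∑ n ∈ s, term n) = gam a b := by
  rw [map_sum, ← Finset.sum_subset hs (fun x hx hnx => by
    rw [coeff_term_ne x a b (by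
      rw [mem_Tset] at hnx
      simp only [NN]
      omega)])]
  rw [← map_sum, ← U00, gam]

lemma hasProdFf : HasProd Ff Lser := by
  rw [HasProd]
  apply tendsto_pi_nhds.mpr
  intro d
  apply Filter.Tendsto.congr' _ (tendsto_const_nhds (x := Lser d))
  apply (Filter.eventually_atTop).2
  refine ⟨Finset.range (d 1 + 1), fun s hs => ?_⟩
  have h1 := sProd (d 0) (d 1) s hs
  rw [dd_eq d] at h1
  exact h1.symm

lemma hasSumTerm : HasSum term Lser := by
  rw [HasSum]
  apply tendsto_pi_nhds.mpr
  intro d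
  apply Filter.Tendsto.congr' _ (tendsto_const_nhds (x := Lser d))
  apply (Filter.eventually_atTop).2
  refine ⟨Tset ((d 0 : ℕ) : ℤ), fun s hs => ?_⟩
  have h1 := sSum (d 0) (d 1) s hs
  rw [gam_eq_lam] at h1
  rw [dd_eq d] at h1
  exact h1.symm

end AGAux

open AGAux in
theorem AG_series_Alladi_Schur_analytic :
    (∏' n : ℕ, (1 + Xx * Qq ^ (2 * n + 1) + Xx ^ 2 * Qq ^ (4 * n + 2)))
      =
    ∑' n : ℕ × ℕ × ℕ,
        (-1 : MvPowerSeries (Fin 2) ℚ) ^ n.2.2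
          * Xx ^ (n.1 + 2 * n.2.1 + 3 * n.2.2)
          * Qq ^ (4 * Nat.choose n.1 2 + 4 * Nat.choose n.2.1 2 + 18 * Nat.choose n.2.2 2
              + 2 * n.1 * n.2.1 + 6 * n.2.1 * n.2.2 + 6 * n.2.2 * n.1
              + n.1 + 2 * n.2.1 + 9 * n.2.2)
          * (poch (Qq ^ 2) (Qq ^ 2) n.1 * poch (Qq ^ 2) (Qq ^ 2) n.2.1
              * poch (Qq ^ 6) (Qq ^ 6) n.2.2)⁻¹ := by
  have h1 : (∏' n : ℕ, (1 + Xx * Qq ^ (2 * n + 1) + Xx ^ 2 * Qq ^ (4 * n + 2))) = Lser :=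
    hasProdFf.tprod_eq
  have h2 : (∑' n : ℕ × ℕ × ℕ,
        (-1 : MvPowerSeries (Fin 2) ℚ) ^ n.2.2
          * Xx ^ (n.1 + 2 * n.2.1 + 3 * n.2.2)
          * Qq ^ (4 * Nat.choose n.1 2 + 4 * Nat.choose n.2.1 2 + 18 * Nat.choose n.2.2 2
              + 2 * n.1 * n.2.1 + 6 * n.2.1 * n.2.2 + 6 * n.2.2 * n.1
              + n.1 + 2 * n.2.1 + 9 * n.2.2)
          * (poch (Qq ^ 2) (Qq ^ 2) n.1 * poch (Qq ^ 2) (Qq ^ 2) n.2.1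
              * poch (Qq ^ 6) (Qq ^ 6) n.2.2)⁻¹) = Lser :=
    hasSumTerm.tsum_eq
  rw [h1, h2]
end
end

section
/- For integers β1, β2, β3, define σ(β1,β2,β3)(n1,n2,n3) = (−1)^{n3} x^{n1+2n2+3n3} q^{4C(n1,2)+4C(n2,2)+18C(n3,2)+2n1n2+6n2n3+6n3n1+β1·n1+β2·n2+β3·n3} / ((q²;q²)_{n1} (q²;q²)_{n2} (q⁶;q⁶)_{n3}) and Σ(β1,β2,β3) = Σ_{n1,n2,n3≥0} σ(β1,β2,β3)(n1,n2,n3), elements of the ring of formal power series in x over the ring of formal Laurent series in q over ℚ. Then for all nonnegative integers k1, k2, k3 and all integers β1, β2, β3: Σ_{n1,n2,n3≥0} σ(β1,β2,β3)(n1,n2,n3) · (q^{2n1};q^{−2})_{k1} (q^{2n2};q^{−2})_{k2} (q^{6n3};q^{−6})_{k3} = (−1)^{k3} x^{k1+2k2+3k3} q^{4C(k1,2)+4C(k2,2)+18C(k3,2)+2k1k2+6k2k3+6k3k1+k1β1+k2β2+k3β3} · Σ(β1+4k1+2k2+6k3, β2+2k1+4k2+6k3, β3+6k1+6k2+18k3).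 -/
noncomputable section

/-- The coefficient field: formal Laurent series in `q` over `ℚ`. -/
abbrev K : Type := LaurentSeries ℚ

/-- `q`, as a Laurent series. -/
def qK : K := HahnSeries.single (1 : ℤ) (1 : ℚ)

instance : TopologicalSpace (PowerSeries K) :=
  Pi.topologicalSpace

/-- `(q²; q²)_n`, as an element of `K`. -/
def poch2 (n : ℕ) : K := ∏ k ∈ Finset.range n, (1 - qK ^ 2 * (qK ^ 2) ^ k)

/-- `(q⁶; q⁶)_n`, as an element of `K`. -/
def poch6 (n : ℕ) : K := ∏ k ∈ Finset.range n, (1 - qK ^ 6 * (qK ^ 6) ^ k)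

/-- `(q^{2m}; q^{-2})_k = ∏_{j=0}^{k-1} (1 - q^{2m-2j})`, as an element of `K`. -/
def desc2 (m k : ℕ) : K := ∏ j ∈ Finset.range k, (1 - qK ^ (2 * (m : ℤ) - 2 * (j : ℤ)))

/-- `(q^{6m}; q^{-6})_k = ∏_{j=0}^{k-1} (1 - q^{6m-6j})`, as an element of `K`. -/
def desc6 (m k : ℕ) : K := ∏ j ∈ Finset.range k, (1 - qK ^ (6 * (m : ℤ) - 6 * (j : ℤ)))

/-- The quadratic-plus-linear exponent
`4C(n₁,2) + 4C(n₂,2) + 18C(n₃,2) + 2n₁n₂ + 6n₂n₃ + 6n₃n₁ + β₁n₁ + β₂n₂ + β₃n₃`. -/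
def expo (b1 b2 b3 : ℤ) (n : ℕ × ℕ × ℕ) : ℤ :=
  4 * (Nat.choose n.1 2 : ℤ) + 4 * (Nat.choose n.2.1 2 : ℤ) + 18 * (Nat.choose n.2.2 2 : ℤ)
    + 2 * (n.1 : ℤ) * (n.2.1 : ℤ) + 6 * (n.2.1 : ℤ) * (n.2.2 : ℤ)
    + 6 * (n.2.2 : ℤ) * (n.1 : ℤ)
    + b1 * (n.1 : ℤ) + b2 * (n.2.1 : ℤ) + b3 * (n.2.2 : ℤ)

/-- The summand `σ(β₁,β₂,β₃)(n₁,n₂,n₃)`, a power series in `x` over `K`. -/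
def sigma (b1 b2 b3 : ℤ) (n : ℕ × ℕ × ℕ) : PowerSeries K :=
  PowerSeries.C
      (((-1 : K) ^ n.2.2 * qK ^ expo b1 b2 b3 n) / (poch2 n.1 * poch2 n.2.1 * poch6 n.2.2))
    * PowerSeries.X ^ (n.1 + 2 * n.2.1 + 3 * n.2.2)

/-- The triple sum `Σ(β₁,β₂,β₃)`. -/
def SigmaSum (b1 b2 b3 : ℤ) : PowerSeries K :=
  ∑' n : ℕ × ℕ × ℕ, sigma b1 b2 b3 n

/-! ### Auxiliary lemmas -/

lemma qK_ne : qK ≠ 0 := HahnSeries.single_ne_zero one_ne_zero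

lemma qK_pow (n : ℕ) : qK ^ n = HahnSeries.single (n : ℤ) (1 : ℚ) := by
  induction n with
  | zero => simp [HahnSeries.single_zero_one]
  | succ n ih => rw [pow_succ, ih, qK, HahnSeries.single_mul_single]; norm_num

lemma one_sub_qK_pow_ne (n : ℕ) (hn : 0 < n) : (1 : K) - qK ^ n ≠ 0 := by
  intro h
  have h0 : ((1 : K) - qK ^ n).coeff 0 = 0 := by rw [h]; simp
  rw [qK_pow] at h0
  rw [HahnSeries.coeff_sub, HahnSeries.coeff_one,
    HahnSeries.coeff_single_of_ne (show (0:ℤ) ≠ (n:ℤ) by exact_mod_cast hn.ne)] at h0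
  simp at h0

lemma one_sub_qK_zpow_ne (a : ℤ) (ha : 0 < a) : (1 : K) - qK ^ a ≠ 0 := by
  have : qK ^ a = qK ^ a.toNat := by rw [← zpow_natCast]; congr 1; omega
  rw [this]; exact one_sub_qK_pow_ne _ (by omega)

lemma gen_shift (c m k : ℕ) :
    ∏ i ∈ Finset.range (m + k), (1 - qK ^ c * (qK ^ c) ^ i)
      = (∏ i ∈ Finset.range m, (1 - qK ^ c * (qK ^ c) ^ i))
        * ∏ j ∈ Finset.range k, (1 - qK ^ ((c : ℤ) * ((m + k : ℕ) : ℤ) - (c : ℤ) * (j : ℤ))) := by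
  rw [Finset.prod_range_add]
  congr 1
  rw [← Finset.prod_range_reflect
    (fun j => 1 - qK ^ ((c : ℤ) * ((m + k : ℕ) : ℤ) - (c : ℤ) * (j : ℤ))) k]
  refine Finset.prod_congr rfl fun x hx => ?_
  simp only [Finset.mem_range] at hx
  have e1 : qK ^ c * (qK ^ c) ^ (m + x) = qK ^ (c * (m + x) + c) := by
    rw [← pow_mul, ← pow_add]; ring_nf
  have e2 : qK ^ ((c : ℤ) * ((m + k : ℕ) : ℤ) - (c : ℤ) * ((k - 1 - x : ℕ) : ℤ))
      = qK ^ (c * (m + x) + c) := by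
    rw [← zpow_natCast qK (c * (m + x) + c)]
    congr 1
    have h1 : ((k - 1 - x : ℕ) : ℤ) = (k : ℤ) - 1 - (x : ℤ) := by omega
    push_cast [h1]; ring
  rw [e1, e2]

lemma gen_nonzero (c : ℕ) (hc : 0 < c) (n : ℕ) :
    (∏ i ∈ Finset.range n, (1 - qK ^ c * (qK ^ c) ^ i)) ≠ 0 := by
  apply Finset.prod_ne_zero_iff.mpr
  intro i _
  have e1 : qK ^ c * (qK ^ c) ^ i = qK ^ (c * i + c) := by rw [← pow_mul, ← pow_add]; ring_nf
  rw [e1]; exact one_sub_qK_pow_ne _ (by omega)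

lemma gen_desc_nonzero (c m k : ℕ) (hc : 0 < c) :
    (∏ j ∈ Finset.range k, (1 - qK ^ ((c : ℤ) * ((m + k : ℕ) : ℤ) - (c : ℤ) * (j : ℤ)))) ≠ 0 := by
  apply Finset.prod_ne_zero_iff.mpr
  intro j hj
  simp only [Finset.mem_range] at hj
  exact one_sub_qK_zpow_ne _ (by push_cast; nlinarith [hj, hc])

lemma gen_desc_zero (c n k : ℕ) (h : n < k) :
    (∏ j ∈ Finset.range k, (1 - qK ^ ((c : ℤ) * (n : ℤ) - (c : ℤ) * (j : ℤ)))) = 0 := by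
  apply Finset.prod_eq_zero (Finset.mem_range.mpr h)
  simp

lemma poch2_ne (n : ℕ) : poch2 n ≠ 0 := gen_nonzero 2 (by norm_num) n

lemma poch6_ne (n : ℕ) : poch6 n ≠ 0 := gen_nonzero 6 (by norm_num) n

lemma poch2_shift (m k : ℕ) : poch2 (m + k) = poch2 m * desc2 (m + k) k := by
  have h := gen_shift 2 m k
  push_cast at h
  simpa [poch2, desc2] using h

lemma poch6_shift (m k : ℕ) : poch6 (m + k) = poch6 m * desc6 (m + k) k := by
  have h := gen_shift 6 m k
  push_cast at h
  simpa [poch6, desc6] using h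

lemma desc2_shift_ne (m k : ℕ) : desc2 (m + k) k ≠ 0 := by
  have h := gen_desc_nonzero 2 m k (by norm_num)
  push_cast at h
  simpa [desc2] using h

lemma desc6_shift_ne (m k : ℕ) : desc6 (m + k) k ≠ 0 := by
  have h := gen_desc_nonzero 6 m k (by norm_num)
  push_cast at h
  simpa [desc6] using h

lemma desc2_zero (n k : ℕ) (h : n < k) : desc2 n k = 0 := by
  have hh := gen_desc_zero 2 n k h
  push_cast at hh
  simpa [desc2] using hh

lemma desc6_zero (n k : ℕ) (h : n < k) : desc6 n k = 0 := by
  have hh := gen_desc_zero 6 n k h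
  push_cast at hh
  simpa [desc6] using hh

lemma choose2_add (m k : ℕ) : (((m + k).choose 2 : ℕ) : ℤ)
    = (m.choose 2 : ℤ) + (k.choose 2 : ℤ) + (m : ℤ) * (k : ℤ) := by
  induction k with
  | zero => simp
  | succ k ih =>
    have h1 : m + (k + 1) = (m + k) + 1 := by ring
    rw [h1, Nat.choose_succ_succ (m + k) 1, Nat.choose_succ_succ k 1]
    push_cast [Nat.choose_one_right] at ih ⊢
    linarith

lemma field_key {F : Type*} [Field F] (s t u v P1 P2 P3 D1 D2 D3 : F)
    (h1 : D1 ≠ 0) (h2 : D2 ≠ 0) (h3 : D3 ≠ 0)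
    (hp1 : P1 ≠ 0) (hp2 : P2 ≠ 0) (hp3 : P3 ≠ 0) :
    s * t * (u * v) / (P1 * D1 * (P2 * D2) * (P3 * D3)) * (D1 * D2 * D3)
      = t * u * (s * v / (P1 * P2 * P3)) := by
  field_simp

/-- The key pointwise identity. -/
lemma sigma_mul (b1 b2 b3 : ℤ) (k1 k2 k3 : ℕ) (m : ℕ × ℕ × ℕ) :
    sigma b1 b2 b3 (m.1 + k1, m.2.1 + k2, m.2.2 + k3)
        * PowerSeries.C (desc2 (m.1 + k1) k1 * desc2 (m.2.1 + k2) k2 * desc6 (m.2.2 + k3) k3)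
      = PowerSeries.C
          ((-1 : K) ^ k3
            * qK ^ (4 * (Nat.choose k1 2 : ℤ) + 4 * (Nat.choose k2 2 : ℤ)
                + 18 * (Nat.choose k3 2 : ℤ)
                + 2 * (k1 : ℤ) * (k2 : ℤ) + 6 * (k2 : ℤ) * (k3 : ℤ) + 6 * (k3 : ℤ) * (k1 : ℤ)
                + (k1 : ℤ) * b1 + (k2 : ℤ) * b2 + (k3 : ℤ) * b3))
        * PowerSeries.X ^ (k1 + 2 * k2 + 3 * k3)
        * sigma (b1 + 4 * (k1 : ℤ) + 2 * (k2 : ℤ) + 6 * (k3 : ℤ))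
            (b2 + 2 * (k1 : ℤ) + 4 * (k2 : ℤ) + 6 * (k3 : ℤ))
            (b3 + 6 * (k1 : ℤ) + 6 * (k2 : ℤ) + 18 * (k3 : ℤ)) m := by
  obtain ⟨m1, m2, m3⟩ := m
  have hexpo : expo b1 b2 b3 (m1 + k1, m2 + k2, m3 + k3)
      = (4 * (Nat.choose k1 2 : ℤ) + 4 * (Nat.choose k2 2 : ℤ)
          + 18 * (Nat.choose k3 2 : ℤ)
          + 2 * (k1 : ℤ) * (k2 : ℤ) + 6 * (k2 : ℤ) * (k3 : ℤ) + 6 * (k3 : ℤ) * (k1 : ℤ)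
          + (k1 : ℤ) * b1 + (k2 : ℤ) * b2 + (k3 : ℤ) * b3)
        + expo (b1 + 4 * (k1 : ℤ) + 2 * (k2 : ℤ) + 6 * (k3 : ℤ))
          (b2 + 2 * (k1 : ℤ) + 4 * (k2 : ℤ) + 6 * (k3 : ℤ))
          (b3 + 6 * (k1 : ℤ) + 6 * (k2 : ℤ) + 18 * (k3 : ℤ)) (m1, m2, m3) := by
    simp only [expo, choose2_add]
    push_cast
    ring
  simp only [sigma]
  rw [hexpo, zpow_add₀ qK_ne]
  rw [poch2_shift m1 k1, poch2_shift m2 k2, poch6_shift m3 k3, pow_add (-1 : K) m3 k3]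
  conv_lhs => rw [mul_right_comm, ← map_mul]
  rw [field_key _ _ _ _ _ _ _ _ _ _ (desc2_shift_ne m1 k1) (desc2_shift_ne m2 k2)
    (desc6_shift_ne m3 k3) (poch2_ne m1) (poch2_ne m2) (poch6_ne m3)]
  rw [map_mul,
    show m1 + k1 + 2 * (m2 + k2) + 3 * (m3 + k3)
      = (k1 + 2 * k2 + 3 * k3) + (m1 + 2 * m2 + 3 * m3) from by ring,
    pow_add]
  exact mul_mul_mul_comm _ _ _ _

instance : T2Space (PowerSeries K) := inferInstanceAs (T2Space ((Unit →₀ ℕ) → K))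

/-- Continuity of left multiplication on `PowerSeries K`. -/
lemma cont_mul_left (g : PowerSeries K) : Continuous (fun f : PowerSeries K => g * f) := by
  apply continuous_pi
  intro x
  have h : (fun f : PowerSeries K => (g * f) x)
      = fun f : PowerSeries K =>
          ∑ p ∈ Finset.HasAntidiagonal.antidiagonal x, (MvPowerSeries.coeff p.1 g) * f p.2 := by
    funext f
    exact MvPowerSeries.coeff_mul x g f
  rw [h]
  exact continuous_finset_sum _ fun p _ => continuous_const.mul (continuous_apply p.2)

/-- Each fixed coefficient of `sigma` is supported on finitely many indices. -/
lemma sigma_summable (b1 b2 b3 : ℤ) : Summable (sigma b1 b2 b3) := by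
  apply Pi.summable.mpr
  intro x
  have hx : x = Finsupp.single () (x ()) :=
    Finsupp.ext fun a => by cases a; exact (Finsupp.single_eq_same).symm
  apply summable_of_ne_finset_zero
    (s := Finset.range (x () + 1) ×ˢ (Finset.range (x () + 1) ×ˢ Finset.range (x () + 1)))
  intro m hm
  simp only [Finset.mem_product, Finset.mem_range, not_and_or, not_lt] at hm
  have hd : x () ≠ m.1 + 2 * m.2.1 + 3 * m.2.2 := by omega
  show sigma b1 b2 b3 m x = 0
  have : sigma b1 b2 b3 m x
      = PowerSeries.coeff (x ()) (sigma b1 b2 b3 m) := by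
    rw [PowerSeries.coeff, MvPowerSeries.coeff_apply, ← hx]
  rw [this, sigma, PowerSeries.coeff_C_mul, PowerSeries.coeff_X_pow, if_neg hd, mul_zero]

theorem sigma_shift_lemma (b1 b2 b3 : ℤ) (k1 k2 k3 : ℕ) :
    (∑' n : ℕ × ℕ × ℕ,
        sigma b1 b2 b3 n
          * PowerSeries.C (desc2 n.1 k1 * desc2 n.2.1 k2 * desc6 n.2.2 k3))
      =
    PowerSeries.C
        ((-1 : K) ^ k3
          * qK ^ (4 * (Nat.choose k1 2 : ℤ) + 4 * (Nat.choose k2 2 : ℤ)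
              + 18 * (Nat.choose k3 2 : ℤ)
              + 2 * (k1 : ℤ) * (k2 : ℤ) + 6 * (k2 : ℤ) * (k3 : ℤ) + 6 * (k3 : ℤ) * (k1 : ℤ)
              + (k1 : ℤ) * b1 + (k2 : ℤ) * b2 + (k3 : ℤ) * b3))
      * PowerSeries.X ^ (k1 + 2 * k2 + 3 * k3)
      * SigmaSum (b1 + 4 * (k1 : ℤ) + 2 * (k2 : ℤ) + 6 * (k3 : ℤ))
          (b2 + 2 * (k1 : ℤ) + 4 * (k2 : ℤ) + 6 * (k3 : ℤ))
          (b3 + 6 * (k1 : ℤ) + 6 * (k2 : ℤ) + 18 * (k3 : ℤ)) := by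
  classical
  let g : PowerSeries K := PowerSeries.C
        ((-1 : K) ^ k3
          * qK ^ (4 * (Nat.choose k1 2 : ℤ) + 4 * (Nat.choose k2 2 : ℤ)
              + 18 * (Nat.choose k3 2 : ℤ)
              + 2 * (k1 : ℤ) * (k2 : ℤ) + 6 * (k2 : ℤ) * (k3 : ℤ) + 6 * (k3 : ℤ) * (k1 : ℤ)
              + (k1 : ℤ) * b1 + (k2 : ℤ) * b2 + (k3 : ℤ) * b3))
      * PowerSeries.X ^ (k1 + 2 * k2 + 3 * k3)
  let G : ℕ × ℕ × ℕ → PowerSeries K :=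
    sigma (b1 + 4 * (k1 : ℤ) + 2 * (k2 : ℤ) + 6 * (k3 : ℤ))
      (b2 + 2 * (k1 : ℤ) + 4 * (k2 : ℤ) + 6 * (k3 : ℤ))
      (b3 + 6 * (k1 : ℤ) + 6 * (k2 : ℤ) + 18 * (k3 : ℤ))
  let F : ℕ × ℕ × ℕ → PowerSeries K := fun n =>
    sigma b1 b2 b3 n
      * PowerSeries.C (desc2 n.1 k1 * desc2 n.2.1 k2 * desc6 n.2.2 k3)
  let e : ℕ × ℕ × ℕ → ℕ × ℕ × ℕ := fun m => (m.1 + k1, m.2.1 + k2, m.2.2 + k3)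
  have hinj : Function.Injective e := by
    intro a b h
    simp only [e, Prod.ext_iff] at h ⊢
    omega
  have hsupp : Function.support F ⊆ Set.range e := by
    intro n hn
    by_contra hcon
    apply hn
    have hnk : ¬ (k1 ≤ n.1 ∧ k2 ≤ n.2.1 ∧ k3 ≤ n.2.2) := by
      intro ⟨h1, h2, h3⟩
      exact hcon ⟨(n.1 - k1, n.2.1 - k2, n.2.2 - k3), by
        simp only [e, Prod.ext_iff]
        refine ⟨by omega, by omega, by omega⟩⟩
    have hz : desc2 n.1 k1 * desc2 n.2.1 k2 * desc6 n.2.2 k3 = 0 := by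
      rcases not_and_or.mp hnk with h | h
      · rw [desc2_zero n.1 k1 (by omega)]; ring
      · rcases not_and_or.mp h with h' | h'
        · rw [desc2_zero n.2.1 k2 (by omega)]; ring
        · rw [desc6_zero n.2.2 k3 (by omega)]; ring
    show F n = 0
    simp only [F, hz, map_zero, mul_zero]
  have h1 : (∑' n : ℕ × ℕ × ℕ, F n) = ∑' m : ℕ × ℕ × ℕ, F (e m) :=
    (hinj.tsum_eq hsupp).symm
  have hpt : ∀ m : ℕ × ℕ × ℕ, F (e m) = g * G m := fun m =>
    sigma_mul b1 b2 b3 k1 k2 k3 m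
  have hsum : Summable G := sigma_summable _ _ _
  have hmap : HasSum (fun m => g * G m) (g * ∑' m, G m) :=
    (hsum.hasSum.map (AddMonoidHom.mulLeft g) (cont_mul_left g))
  show (∑' n : ℕ × ℕ × ℕ, F n) = g * SigmaSum _ _ _
  rw [h1, tsum_congr hpt, hmap.tsum_eq]
  rfl
end
end

section
/- Define S(x) = Σ_{n1,n2,n3≥0} (−1)^{n3} x^{n1+2n2+3n3} q^{4C(n1,2)+4C(n2,2)+18C(n3,2)+2n1n2+6n2n3+6n3n1+n1+2n2+9n3} / ((q²;q²)_{n1} (q²;q²)_{n2} (q⁶;q⁶)_{n3}), a formal power series in x and q. Then S(x) = (1 + xq + x²q²)·S(xq²), where S(xq²) denotes the series obtained by the substitution x ↦ xq². -/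
noncomputable section

/-- `S(t)`: substituting `t = x qᵏ` realizes the series `S(xqᵏ)`. -/
def S (t : MvPowerSeries (Fin 2) ℚ) : MvPowerSeries (Fin 2) ℚ :=
  ∑' n : ℕ × ℕ × ℕ,
    (-1 : MvPowerSeries (Fin 2) ℚ) ^ n.2.2
      * t ^ (n.1 + 2 * n.2.1 + 3 * n.2.2)
      * Qq ^ (4 * Nat.choose n.1 2 + 4 * Nat.choose n.2.1 2 + 18 * Nat.choose n.2.2 2
          + 2 * n.1 * n.2.1 + 6 * n.2.1 * n.2.2 + 6 * n.2.2 * n.1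
          + n.1 + 2 * n.2.1 + 9 * n.2.2)
      * (poch (Qq ^ 2) (Qq ^ 2) n.1 * poch (Qq ^ 2) (Qq ^ 2) n.2.1
          * poch (Qq ^ 6) (Qq ^ 6) n.2.2)⁻¹

namespace SAux

abbrev M := MvPowerSeries (Fin 2) ℚ

instance : T2Space M := inferInstanceAs (T2Space ((Fin 2 →₀ ℕ) → ℚ))

instance : IsTopologicalAddGroup M :=
  inferInstanceAs (IsTopologicalAddGroup ((Fin 2 →₀ ℕ) → ℚ))

instance : ContinuousMul M := by
  constructor
  have key : ∀ μ : Fin 2 →₀ ℕ, Continuous fun p : M × M => (p.1 * p.2) μ := by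
    intro μ
    have h : (fun p : M × M => (p.1 * p.2) μ)
        = fun p : M × M => ∑ x ∈ Finset.HasAntidiagonal.antidiagonal μ, p.1 x.1 * p.2 x.2 := by
      funext p
      exact MvPowerSeries.coeff_mul (n := μ) (φ := p.1) (ψ := p.2)
    rw [h]
    apply continuous_finset_sum
    intro i _
    exact ((continuous_apply i.1).comp continuous_fst).mul
      ((continuous_apply i.2).comp continuous_snd)
  exact continuous_pi key

instance : IsTopologicalSemiring M := ⟨⟩

/-- total `x`-degree -/
def NN (n : ℕ × ℕ × ℕ) : ℕ := n.1 + 2 * n.2.1 + 3 * n.2.2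

/-- the `q`-exponent -/
def EE (n : ℕ × ℕ × ℕ) : ℕ :=
  4 * Nat.choose n.1 2 + 4 * Nat.choose n.2.1 2 + 18 * Nat.choose n.2.2 2
    + 2 * n.1 * n.2.1 + 6 * n.2.1 * n.2.2 + 6 * n.2.2 * n.1
    + n.1 + 2 * n.2.1 + 9 * n.2.2

/-- the denominator -/
def den (n : ℕ × ℕ × ℕ) : M :=
  poch (Qq ^ 2) (Qq ^ 2) n.1 * poch (Qq ^ 2) (Qq ^ 2) n.2.1
    * poch (Qq ^ 6) (Qq ^ 6) n.2.2

/-- the general term, with auxiliary weight `q^{b·n}` -/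
def f (b : ℕ × ℕ × ℕ) (n : ℕ × ℕ × ℕ) : M :=
  (-1 : M) ^ n.2.2 * Xx ^ NN n
    * Qq ^ (EE n + (b.1 * n.1 + b.2.1 * n.2.1 + b.2.2 * n.2.2))
    * (den n)⁻¹

/-- the generalized series -/
def s (b : ℕ × ℕ × ℕ) : M := ∑' n : ℕ × ℕ × ℕ, f b n

lemma coeff_f_eq_zero (b : ℕ × ℕ × ℕ) (n : ℕ × ℕ × ℕ) (μ : Fin 2 →₀ ℕ)
    (h : μ 0 < NN n) : f b n μ = 0 := by
  have hf : f b n = (MvPowerSeries.monomial (Finsupp.single (0 : Fin 2) (NN n)) 1)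
      * ((-1 : M) ^ n.2.2
        * Qq ^ (EE n + (b.1 * n.1 + b.2.1 * n.2.1 + b.2.2 * n.2.2)) * (den n)⁻¹) := by
    rw [← MvPowerSeries.X_pow_eq]
    show f b n = (Xx : M) ^ NN n * _
    unfold f
    ring
  have := MvPowerSeries.coeff_monomial_mul (m := μ)
    (n := Finsupp.single (0 : Fin 2) (NN n))
    (φ := ((-1 : M) ^ n.2.2
        * Qq ^ (EE n + (b.1 * n.1 + b.2.1 * n.2.1 + b.2.2 * n.2.2)) * (den n)⁻¹))
    (1 : ℚ)
  have hle : ¬ Finsupp.single (0 : Fin 2) (NN n) ≤ μ := by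
    intro hc
    exact absurd (Finsupp.single_le_iff.mp hc) (by omega)
  calc f b n μ = MvPowerSeries.coeff μ (f b n) := rfl
    _ = 0 := by rw [hf, this, if_neg hle]

lemma summable_f (b : ℕ × ℕ × ℕ) : Summable (f b) := by
  have key : ∀ μ : Fin 2 →₀ ℕ, Summable (fun n : ℕ × ℕ × ℕ => f b n μ) := by
    intro μ
    apply summable_of_ne_finset_zero
      (s := Finset.range (μ 0 + 1) ×ˢ (Finset.range (μ 0 + 1) ×ˢ Finset.range (μ 0 + 1)))
    intro n hn
    apply coeff_f_eq_zero
    simp only [Finset.mem_product, Finset.mem_range] at hn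
    unfold NN
    omega
  exact Pi.summable.2 key

lemma cc_one_sub_Qq_pow (k : ℕ) (hk : k ≠ 0) :
    MvPowerSeries.constantCoeff (1 - Qq ^ k) = 1 := by
  simp [Qq, MvPowerSeries.constantCoeff_X, zero_pow hk]

lemma inv_cancel_aux (u d : M) (hu : MvPowerSeries.constantCoeff u ≠ 0) :
    u * (u * d)⁻¹ = d⁻¹ := by
  rw [MvPowerSeries.mul_inv_rev]
  calc u * (d⁻¹ * u⁻¹) = d⁻¹ * (u * u⁻¹) := by ring
    _ = d⁻¹ := by rw [MvPowerSeries.mul_inv_cancel u hu, mul_one]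

lemma poch_succ (A B : MvPowerSeries (Fin 2) ℚ) (n : ℕ) :
    poch A B (n + 1) = poch A B n * (1 - A * B ^ n) := by
  unfold poch
  exact Finset.prod_range_succ _ _

lemma den_succ1 (m1 m2 m3 : ℕ) :
    den (m1 + 1, m2, m3) = (1 - Qq ^ (2 * m1 + 2)) * den (m1, m2, m3) := by
  show poch (Qq ^ 2) (Qq ^ 2) (m1 + 1) * _ * _ = _
  rw [poch_succ]
  unfold den
  have : Qq ^ 2 * (Qq ^ 2) ^ m1 = Qq ^ (2 * m1 + 2) := by ring
  rw [this]
  ring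

lemma den_succ2 (m1 m2 m3 : ℕ) :
    den (m1, m2 + 1, m3) = (1 - Qq ^ (2 * m2 + 2)) * den (m1, m2, m3) := by
  show _ * poch (Qq ^ 2) (Qq ^ 2) (m2 + 1) * _ = _
  rw [poch_succ]
  unfold den
  have : Qq ^ 2 * (Qq ^ 2) ^ m2 = Qq ^ (2 * m2 + 2) := by ring
  rw [this]
  ring

lemma den_succ3 (m1 m2 m3 : ℕ) :
    den (m1, m2, m3 + 1) = (1 - Qq ^ (6 * m3 + 6)) * den (m1, m2, m3) := by
  show _ * _ * poch (Qq ^ 6) (Qq ^ 6) (m3 + 1) = _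
  rw [poch_succ]
  unfold den
  have : Qq ^ 6 * (Qq ^ 6) ^ m3 = Qq ^ (6 * m3 + 6) := by ring
  rw [this]
  ring

lemma inv_den_step1 (m1 m2 m3 : ℕ) :
    (1 - Qq ^ (2 * m1 + 2)) * (den (m1 + 1, m2, m3))⁻¹ = (den (m1, m2, m3))⁻¹ := by
  rw [den_succ1]
  exact inv_cancel_aux _ _ (by rw [cc_one_sub_Qq_pow _ (by omega)]; norm_num)

lemma inv_den_step2 (m1 m2 m3 : ℕ) :
    (1 - Qq ^ (2 * m2 + 2)) * (den (m1, m2 + 1, m3))⁻¹ = (den (m1, m2, m3))⁻¹ := by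
  rw [den_succ2]
  exact inv_cancel_aux _ _ (by rw [cc_one_sub_Qq_pow _ (by omega)]; norm_num)

lemma inv_den_step3 (m1 m2 m3 : ℕ) :
    (1 - Qq ^ (6 * m3 + 6)) * (den (m1, m2, m3 + 1))⁻¹ = (den (m1, m2, m3))⁻¹ := by
  rw [den_succ3]
  exact inv_cancel_aux _ _ (by rw [cc_one_sub_Qq_pow _ (by omega)]; norm_num)

lemma choose_succ_two (n : ℕ) : (n + 1).choose 2 = n.choose 2 + n := by
  simp [Nat.choose_succ_succ]
  omega

lemma EE_succ1 (m1 m2 m3 : ℕ) :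
    EE (m1 + 1, m2, m3) = EE (m1, m2, m3) + (4 * m1 + 2 * m2 + 6 * m3 + 1) := by
  unfold EE
  simp only [choose_succ_two]
  ring

lemma EE_succ2 (m1 m2 m3 : ℕ) :
    EE (m1, m2 + 1, m3) = EE (m1, m2, m3) + (2 * m1 + 4 * m2 + 6 * m3 + 2) := by
  unfold EE
  simp only [choose_succ_two]
  ring

lemma EE_succ3 (m1 m2 m3 : ℕ) :
    EE (m1, m2, m3 + 1) = EE (m1, m2, m3) + (6 * m1 + 6 * m2 + 18 * m3 + 9) := by
  unfold EE
  simp only [choose_succ_two]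
  ring

lemma key1 (b1 b2 b3 m1 m2 m3 : ℕ) :
    f (b1, b2, b3) (m1 + 1, m2, m3) - f (b1 + 2, b2, b3) (m1 + 1, m2, m3)
      = Xx * Qq ^ (b1 + 1) * f (b1 + 4, b2 + 2, b3 + 6) (m1, m2, m3) := by
  have hstep := inv_den_step1 m1 m2 m3
  unfold f NN
  simp only [EE_succ1]
  have hsplit :
      (-1 : M) ^ m3 * Xx ^ (m1 + 1 + 2 * m2 + 3 * m3)
          * Qq ^ (EE (m1, m2, m3) + (4 * m1 + 2 * m2 + 6 * m3 + 1)
              + (b1 * (m1 + 1) + b2 * m2 + b3 * m3)) * (den (m1 + 1, m2, m3))⁻¹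
        - (-1 : M) ^ m3 * Xx ^ (m1 + 1 + 2 * m2 + 3 * m3)
          * Qq ^ (EE (m1, m2, m3) + (4 * m1 + 2 * m2 + 6 * m3 + 1)
              + ((b1 + 2) * (m1 + 1) + b2 * m2 + b3 * m3)) * (den (m1 + 1, m2, m3))⁻¹
      = (-1 : M) ^ m3 * Xx ^ (m1 + 1 + 2 * m2 + 3 * m3)
          * Qq ^ (EE (m1, m2, m3) + (4 * m1 + 2 * m2 + 6 * m3 + 1)
              + (b1 * (m1 + 1) + b2 * m2 + b3 * m3))
          * ((1 - Qq ^ (2 * m1 + 2)) * (den (m1 + 1, m2, m3))⁻¹) := by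
    have : (b1 + 2) * (m1 + 1) + b2 * m2 + b3 * m3
        = (b1 * (m1 + 1) + b2 * m2 + b3 * m3) + (2 * m1 + 2) := by ring
    rw [this]
    ring
  rw [hsplit, hstep]
  have hexp : EE (m1, m2, m3) + (4 * m1 + 2 * m2 + 6 * m3 + 1)
      + (b1 * (m1 + 1) + b2 * m2 + b3 * m3)
      = (b1 + 1) + (EE (m1, m2, m3)
          + ((b1 + 4) * m1 + (b2 + 2) * m2 + (b3 + 6) * m3)) := by ring
  rw [hexp]
  ring

lemma key2 (b1 b2 b3 m1 m2 m3 : ℕ) :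
    f (b1, b2, b3) (m1, m2 + 1, m3) - f (b1, b2 + 2, b3) (m1, m2 + 1, m3)
      = Xx ^ 2 * Qq ^ (b2 + 2) * f (b1 + 2, b2 + 4, b3 + 6) (m1, m2, m3) := by
  have hstep := inv_den_step2 m1 m2 m3
  unfold f NN
  simp only [EE_succ2]
  have hsplit :
      (-1 : M) ^ m3 * Xx ^ (m1 + 2 * (m2 + 1) + 3 * m3)
          * Qq ^ (EE (m1, m2, m3) + (2 * m1 + 4 * m2 + 6 * m3 + 2)
              + (b1 * m1 + b2 * (m2 + 1) + b3 * m3)) * (den (m1, m2 + 1, m3))⁻¹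
        - (-1 : M) ^ m3 * Xx ^ (m1 + 2 * (m2 + 1) + 3 * m3)
          * Qq ^ (EE (m1, m2, m3) + (2 * m1 + 4 * m2 + 6 * m3 + 2)
              + (b1 * m1 + (b2 + 2) * (m2 + 1) + b3 * m3)) * (den (m1, m2 + 1, m3))⁻¹
      = (-1 : M) ^ m3 * Xx ^ (m1 + 2 * (m2 + 1) + 3 * m3)
          * Qq ^ (EE (m1, m2, m3) + (2 * m1 + 4 * m2 + 6 * m3 + 2)
              + (b1 * m1 + b2 * (m2 + 1) + b3 * m3))
          * ((1 - Qq ^ (2 * m2 + 2)) * (den (m1, m2 + 1, m3))⁻¹) := by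
    have : b1 * m1 + (b2 + 2) * (m2 + 1) + b3 * m3
        = (b1 * m1 + b2 * (m2 + 1) + b3 * m3) + (2 * m2 + 2) := by ring
    rw [this]
    ring
  rw [hsplit, hstep]
  have hexp : EE (m1, m2, m3) + (2 * m1 + 4 * m2 + 6 * m3 + 2)
      + (b1 * m1 + b2 * (m2 + 1) + b3 * m3)
      = (b2 + 2) + (EE (m1, m2, m3)
          + ((b1 + 2) * m1 + (b2 + 4) * m2 + (b3 + 6) * m3)) := by ring
  rw [hexp]
  ring

lemma key3 (b1 b2 b3 m1 m2 m3 : ℕ) :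
    f (b1, b2, b3) (m1, m2, m3 + 1) - f (b1, b2, b3 + 6) (m1, m2, m3 + 1)
      = -(Xx ^ 3 * Qq ^ (b3 + 9) * f (b1 + 6, b2 + 6, b3 + 18) (m1, m2, m3)) := by
  have hstep := inv_den_step3 m1 m2 m3
  unfold f NN
  simp only [EE_succ3]
  have hsplit :
      (-1 : M) ^ (m3 + 1) * Xx ^ (m1 + 2 * m2 + 3 * (m3 + 1))
          * Qq ^ (EE (m1, m2, m3) + (6 * m1 + 6 * m2 + 18 * m3 + 9)
              + (b1 * m1 + b2 * m2 + b3 * (m3 + 1))) * (den (m1, m2, m3 + 1))⁻¹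
        - (-1 : M) ^ (m3 + 1) * Xx ^ (m1 + 2 * m2 + 3 * (m3 + 1))
          * Qq ^ (EE (m1, m2, m3) + (6 * m1 + 6 * m2 + 18 * m3 + 9)
              + (b1 * m1 + b2 * m2 + (b3 + 6) * (m3 + 1))) * (den (m1, m2, m3 + 1))⁻¹
      = (-1 : M) ^ (m3 + 1) * Xx ^ (m1 + 2 * m2 + 3 * (m3 + 1))
          * Qq ^ (EE (m1, m2, m3) + (6 * m1 + 6 * m2 + 18 * m3 + 9)
              + (b1 * m1 + b2 * m2 + b3 * (m3 + 1)))
          * ((1 - Qq ^ (6 * m3 + 6)) * (den (m1, m2, m3 + 1))⁻¹) := by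
    have : b1 * m1 + b2 * m2 + (b3 + 6) * (m3 + 1)
        = (b1 * m1 + b2 * m2 + b3 * (m3 + 1)) + (6 * m3 + 6) := by ring
    rw [this]
    ring
  rw [hsplit, hstep]
  have hexp : EE (m1, m2, m3) + (6 * m1 + 6 * m2 + 18 * m3 + 9)
      + (b1 * m1 + b2 * m2 + b3 * (m3 + 1))
      = (b3 + 9) + (EE (m1, m2, m3)
          + ((b1 + 6) * m1 + (b2 + 6) * m2 + (b3 + 18) * m3)) := by ring
  rw [hexp]
  have hsgn : (-1 : M) ^ (m3 + 1) = -(-1 : M) ^ m3 := by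
    rw [pow_succ]; ring
  rw [hsgn]
  ring

set_option maxHeartbeats 1600000 in
lemma ruleA1 (b1 b2 b3 : ℕ) :
    s (b1, b2, b3) = s (b1 + 2, b2, b3)
      + Xx * Qq ^ (b1 + 1) * s (b1 + 4, b2 + 2, b3 + 6) := by
  have hs1 := summable_f (b1, b2, b3)
  have hs2 := summable_f (b1 + 2, b2, b3)
  have hs3 := summable_f (b1 + 4, b2 + 2, b3 + 6)
  have hsub : s (b1, b2, b3) - s (b1 + 2, b2, b3)
      = ∑' n : ℕ × ℕ × ℕ, (f (b1, b2, b3) n - f (b1 + 2, b2, b3) n) :=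
    (Summable.tsum_sub hs1 hs2).symm
  have hinj : Function.Injective
      (fun m : ℕ × ℕ × ℕ => ((m.1 + 1, m.2.1, m.2.2) : ℕ × ℕ × ℕ)) := by
    intro a b h
    simp only [Prod.mk.injEq] at h
    exact Prod.ext (by omega) (Prod.ext h.2.1 h.2.2)
  have hsupp : Function.support
        (fun n : ℕ × ℕ × ℕ => f (b1, b2, b3) n - f (b1 + 2, b2, b3) n)
      ⊆ Set.range (fun m : ℕ × ℕ × ℕ => ((m.1 + 1, m.2.1, m.2.2) : ℕ × ℕ × ℕ)) := by
    intro n hn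
    rcases n with ⟨n1, n2, n3⟩
    cases n1 with
    | zero =>
      exfalso
      apply hn
      show f (b1, b2, b3) (0, n2, n3) - f (b1 + 2, b2, b3) (0, n2, n3) = 0
      unfold f
      norm_num
    | succ k =>
      exact ⟨(k, n2, n3), rfl⟩
  have hre := Function.Injective.tsum_eq hinj hsupp
  have hcong : ∑' m : ℕ × ℕ × ℕ,
        (f (b1, b2, b3) (m.1 + 1, m.2.1, m.2.2)
          - f (b1 + 2, b2, b3) (m.1 + 1, m.2.1, m.2.2))
      = Xx * Qq ^ (b1 + 1) * s (b1 + 4, b2 + 2, b3 + 6) := by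
    have hc := tsum_congr (L := SummationFilter.unconditional _)
      (f := fun m : ℕ × ℕ × ℕ => f (b1, b2, b3) (m.1 + 1, m.2.1, m.2.2)
            - f (b1 + 2, b2, b3) (m.1 + 1, m.2.1, m.2.2))
      (g := fun m : ℕ × ℕ × ℕ => Xx * Qq ^ (b1 + 1) * f (b1 + 4, b2 + 2, b3 + 6) m)
      (fun m => key1 b1 b2 b3 m.1 m.2.1 m.2.2)
    rw [hc]
    exact hs3.tsum_mul_left _
  have : s (b1, b2, b3) - s (b1 + 2, b2, b3)
      = Xx * Qq ^ (b1 + 1) * s (b1 + 4, b2 + 2, b3 + 6) := by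
    rw [hsub, ← hre]
    exact hcong
  linear_combination this

set_option maxHeartbeats 1600000 in
lemma ruleA2 (b1 b2 b3 : ℕ) :
    s (b1, b2, b3) = s (b1, b2 + 2, b3)
      + Xx ^ 2 * Qq ^ (b2 + 2) * s (b1 + 2, b2 + 4, b3 + 6) := by
  have hs1 := summable_f (b1, b2, b3)
  have hs2 := summable_f (b1, b2 + 2, b3)
  have hs3 := summable_f (b1 + 2, b2 + 4, b3 + 6)
  have hsub : s (b1, b2, b3) - s (b1, b2 + 2, b3)
      = ∑' n : ℕ × ℕ × ℕ, (f (b1, b2, b3) n - f (b1, b2 + 2, b3) n) :=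
    (Summable.tsum_sub hs1 hs2).symm
  have hinj : Function.Injective
      (fun m : ℕ × ℕ × ℕ => ((m.1, m.2.1 + 1, m.2.2) : ℕ × ℕ × ℕ)) := by
    intro a b h
    simp only [Prod.mk.injEq] at h
    exact Prod.ext h.1 (Prod.ext (by omega) h.2.2)
  have hsupp : Function.support
        (fun n : ℕ × ℕ × ℕ => f (b1, b2, b3) n - f (b1, b2 + 2, b3) n)
      ⊆ Set.range (fun m : ℕ × ℕ × ℕ => ((m.1, m.2.1 + 1, m.2.2) : ℕ × ℕ × ℕ)) := by
    intro n hn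
    rcases n with ⟨n1, n2, n3⟩
    cases n2 with
    | zero =>
      exfalso
      apply hn
      show f (b1, b2, b3) (n1, 0, n3) - f (b1, b2 + 2, b3) (n1, 0, n3) = 0
      unfold f
      norm_num
    | succ k =>
      exact ⟨(n1, k, n3), rfl⟩
  have hre := Function.Injective.tsum_eq hinj hsupp
  have hcong : ∑' m : ℕ × ℕ × ℕ,
        (f (b1, b2, b3) (m.1, m.2.1 + 1, m.2.2)
          - f (b1, b2 + 2, b3) (m.1, m.2.1 + 1, m.2.2))
      = Xx ^ 2 * Qq ^ (b2 + 2) * s (b1 + 2, b2 + 4, b3 + 6) := by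
    have hc := tsum_congr (L := SummationFilter.unconditional _)
      (f := fun m : ℕ × ℕ × ℕ => f (b1, b2, b3) (m.1, m.2.1 + 1, m.2.2)
            - f (b1, b2 + 2, b3) (m.1, m.2.1 + 1, m.2.2))
      (g := fun m : ℕ × ℕ × ℕ => Xx ^ 2 * Qq ^ (b2 + 2) * f (b1 + 2, b2 + 4, b3 + 6) m)
      (fun m => key2 b1 b2 b3 m.1 m.2.1 m.2.2)
    rw [hc]
    exact hs3.tsum_mul_left _
  have : s (b1, b2, b3) - s (b1, b2 + 2, b3)
      = Xx ^ 2 * Qq ^ (b2 + 2) * s (b1 + 2, b2 + 4, b3 + 6) := by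
    rw [hsub, ← hre]
    exact hcong
  linear_combination this

set_option maxHeartbeats 1600000 in
lemma ruleA3 (b1 b2 b3 : ℕ) :
    s (b1, b2, b3) = s (b1, b2, b3 + 6)
      - Xx ^ 3 * Qq ^ (b3 + 9) * s (b1 + 6, b2 + 6, b3 + 18) := by
  have hs1 := summable_f (b1, b2, b3)
  have hs2 := summable_f (b1, b2, b3 + 6)
  have hs3 := summable_f (b1 + 6, b2 + 6, b3 + 18)
  have hsub : s (b1, b2, b3) - s (b1, b2, b3 + 6)
      = ∑' n : ℕ × ℕ × ℕ, (f (b1, b2, b3) n - f (b1, b2, b3 + 6) n) :=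
    (Summable.tsum_sub hs1 hs2).symm
  have hinj : Function.Injective
      (fun m : ℕ × ℕ × ℕ => ((m.1, m.2.1, m.2.2 + 1) : ℕ × ℕ × ℕ)) := by
    intro a b h
    simp only [Prod.mk.injEq] at h
    exact Prod.ext h.1 (Prod.ext h.2.1 (by omega))
  have hsupp : Function.support
        (fun n : ℕ × ℕ × ℕ => f (b1, b2, b3) n - f (b1, b2, b3 + 6) n)
      ⊆ Set.range (fun m : ℕ × ℕ × ℕ => ((m.1, m.2.1, m.2.2 + 1) : ℕ × ℕ × ℕ)) := by
    intro n hn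
    rcases n with ⟨n1, n2, n3⟩
    cases n3 with
    | zero =>
      exfalso
      apply hn
      show f (b1, b2, b3) (n1, n2, 0) - f (b1, b2, b3 + 6) (n1, n2, 0) = 0
      unfold f
      norm_num
    | succ k =>
      exact ⟨(n1, n2, k), rfl⟩
  have hre := Function.Injective.tsum_eq hinj hsupp
  have hcong : ∑' m : ℕ × ℕ × ℕ,
        (f (b1, b2, b3) (m.1, m.2.1, m.2.2 + 1)
          - f (b1, b2, b3 + 6) (m.1, m.2.1, m.2.2 + 1))
      = -(Xx ^ 3 * Qq ^ (b3 + 9) * s (b1 + 6, b2 + 6, b3 + 18)) := by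
    have hc := tsum_congr (L := SummationFilter.unconditional _)
      (f := fun m : ℕ × ℕ × ℕ => f (b1, b2, b3) (m.1, m.2.1, m.2.2 + 1)
            - f (b1, b2, b3 + 6) (m.1, m.2.1, m.2.2 + 1))
      (g := fun m : ℕ × ℕ × ℕ => -(Xx ^ 3 * Qq ^ (b3 + 9) * f (b1 + 6, b2 + 6, b3 + 18) m))
      (fun m => key3 b1 b2 b3 m.1 m.2.1 m.2.2)
    rw [hc, tsum_neg, hs3.tsum_mul_left _]
    rfl
  have : s (b1, b2, b3) - s (b1, b2, b3 + 6)
      = -(Xx ^ 3 * Qq ^ (b3 + 9) * s (b1 + 6, b2 + 6, b3 + 18)) := by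
    rw [hsub, ← hre]
    exact hcong
  linear_combination this

set_option maxHeartbeats 1600000 in
lemma S_eq_s0 : S Xx = s (0, 0, 0) := by
  apply tsum_congr
  intro n
  unfold f NN EE den
  norm_num

set_option maxHeartbeats 1600000 in
lemma S_eq_s246 : S (Xx * Qq ^ 2) = s (2, 4, 6) := by
  apply tsum_congr
  intro n
  unfold f NN EE den
  rw [mul_pow]
  ring

end SAux

theorem S_q_difference :
    S Xx = (1 + Xx * Qq + Xx ^ 2 * Qq ^ 2) * S (Xx * Qq ^ 2) := by
  rw [SAux.S_eq_s0, SAux.S_eq_s246]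
  have e1 := SAux.ruleA2 0 0 0
  have e2 := SAux.ruleA1 0 2 0
  have e3 := SAux.ruleA3 2 2 0
  have e4 := SAux.ruleA2 2 2 6
  have e5 := SAux.ruleA1 4 6 12
  have e6 := SAux.ruleA1 2 4 6
  norm_num at e1 e2 e3 e4 e5 e6
  linear_combination e1 + e2 + e3 + e4 + Xx ^ 2 * Qq ^ 4 * e5 - Xx * Qq * e6
end
end

section
/- Define S(x) = Σ_{n1,n2,n3≥0} (−1)^{n3} x^{n1+2n2+3n3} q^{4C(n1,2)+4C(n2,2)+18C(n3,2)+2n1n2+6n2n3+6n3n1+n1+2n2+9n3} / ((q²;q²)_{n1} (q²;q²)_{n2} (q⁶;q⁶)_{n3}), a formal power series in x and q. Then 0 = S(x) − [x²q²(1 + q² + q⁴) + 1]·S(xq²) + [x⁴q¹⁰(1 + q² + q⁴) + x²q⁶ − xq]·S(xq⁴) − [x⁶q²⁴ − x³q⁹]·S(xq⁶), where S(xqᵏ) denotes the series obtained by the substitution x ↦ xqᵏ. -/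
noncomputable section

/-! ### Auxiliary development -/

abbrev RR := MvPowerSeries (Fin 2) ℚ

instance : T2Space (MvPowerSeries (Fin 2) ℚ) :=
  inferInstanceAs (T2Space ((Fin 2 →₀ ℕ) → ℚ))

instance : IsTopologicalAddGroup (MvPowerSeries (Fin 2) ℚ) :=
  inferInstanceAs (IsTopologicalAddGroup ((Fin 2 →₀ ℕ) → ℚ))

instance : ContinuousMul (MvPowerSeries (Fin 2) ℚ) := by
  constructor
  apply continuous_pi
  intro d
  classical
  have h : (fun p : RR × RR => (p.1 * p.2) d)
      = fun p : RR × RR => ∑ q ∈ Finset.HasAntidiagonal.antidiagonal d,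
          MvPowerSeries.coeff q.1 p.1 * MvPowerSeries.coeff q.2 p.2 := by
    funext p
    exact MvPowerSeries.coeff_mul (R := ℚ) (n := d) (φ := p.1) (ψ := p.2)
  rw [h]
  exact continuous_finset_sum _ fun q _ =>
    (((continuous_apply q.1).comp continuous_fst).mul
      ((continuous_apply q.2).comp continuous_snd))

instance : IsTopologicalSemiring (MvPowerSeries (Fin 2) ℚ) := ⟨⟩

/-- degree in `x` of the summand -/
def mdeg (a b c : ℕ) : ℕ := a + 2 * b + 3 * c

/-- the `q`-exponent of the summand -/
def Eeq (a b c : ℕ) : ℕ :=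
  4 * Nat.choose a 2 + 4 * Nat.choose b 2 + 18 * Nat.choose c 2
    + 2 * a * b + 6 * b * c + 6 * c * a + a + 2 * b + 9 * c

/-- the denominator -/
def Pd (a b c : ℕ) : RR :=
  poch (Qq ^ 2) (Qq ^ 2) a * poch (Qq ^ 2) (Qq ^ 2) b * poch (Qq ^ 6) (Qq ^ 6) c

/-- the `x`-free part of the summand -/
def cc (a b c : ℕ) : RR := (-1 : RR) ^ c * Qq ^ Eeq a b c * (Pd a b c)⁻¹

lemma S_eq (t : RR) :
    S t = ∑' n : ℕ × ℕ × ℕ, t ^ mdeg n.1 n.2.1 n.2.2 * cc n.1 n.2.1 n.2.2 := by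
  unfold S
  refine tsum_congr fun n => ?_
  simp only [cc, Eeq, Pd, mdeg]
  ring

lemma S_eqk (k : ℕ) :
    S (Xx * Qq ^ k) = ∑' n : ℕ × ℕ × ℕ,
      Xx ^ mdeg n.1 n.2.1 n.2.2
        * (Qq ^ (k * mdeg n.1 n.2.1 n.2.2) * cc n.1 n.2.1 n.2.2) := by
  rw [S_eq]
  refine tsum_congr fun n => ?_
  rw [mul_pow, ← pow_mul, mul_assoc]

/-! ### Summability -/

lemma summable_main (h : ℕ × ℕ × ℕ → RR) :
    Summable (fun n : ℕ × ℕ × ℕ => Xx ^ mdeg n.1 n.2.1 n.2.2 * h n) := by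
  apply Pi.summable.mpr
  intro d
  classical
  apply summable_of_ne_finset_zero
    (s := (Finset.range (d 0 + 1)) ×ˢ (Finset.range (d 0 + 1)) ×ˢ (Finset.range (d 0 + 1)))
  rintro ⟨a, b, c⟩ hn
  simp only [Finset.mem_product, Finset.mem_range, not_and_or, not_lt] at hn
  show MvPowerSeries.coeff d (Xx ^ mdeg a b c * h (a, b, c)) = 0
  rw [MvPowerSeries.coeff_mul]
  apply Finset.sum_eq_zero
  rintro ⟨p, r⟩ hpr
  rw [Finset.HasAntidiagonal.mem_antidiagonal] at hpr
  have hp0 : p 0 + r 0 = d 0 := by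
    rw [← hpr]; simp
  have hz : MvPowerSeries.coeff p (Xx ^ mdeg a b c) = 0 := by
    rw [Xx, MvPowerSeries.coeff_X_pow, if_neg]
    rintro rfl
    simp only [Finsupp.single_eq_same] at hp0
    simp only [mdeg] at hp0
    omega
  rw [hz, zero_mul]

/-! ### Reindexing -/

lemma tsum_shift₁ (f : ℕ × ℕ × ℕ → RR) (h0 : ∀ b c, f (0, b, c) = 0) :
    ∑' n : ℕ × ℕ × ℕ, f (n.1 + 1, n.2.1, n.2.2) = ∑' n, f n := by
  apply Function.Injective.tsum_eq (g := fun n : ℕ × ℕ × ℕ => (n.1 + 1, n.2.1, n.2.2))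
  · rintro ⟨a, b, c⟩ ⟨a', b', c'⟩ hEq
    simp only [Prod.mk.injEq] at hEq
    obtain ⟨h1, h2, h3⟩ := hEq
    simp only [Prod.mk.injEq]
    omega
  · rintro ⟨a, b, c⟩ hn
    match a with
    | 0 => exact absurd (h0 b c) hn
    | a + 1 => exact ⟨(a, b, c), rfl⟩

lemma tsum_shift₂ (f : ℕ × ℕ × ℕ → RR) (h0 : ∀ a c, f (a, 0, c) = 0) :
    ∑' n : ℕ × ℕ × ℕ, f (n.1, n.2.1 + 1, n.2.2) = ∑' n, f n := by
  apply Function.Injective.tsum_eq (g := fun n : ℕ × ℕ × ℕ => (n.1, n.2.1 + 1, n.2.2))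
  · rintro ⟨a, b, c⟩ ⟨a', b', c'⟩ hEq
    simp only [Prod.mk.injEq] at hEq
    obtain ⟨h1, h2, h3⟩ := hEq
    simp only [Prod.mk.injEq]
    omega
  · rintro ⟨a, b, c⟩ hn
    match b with
    | 0 => exact absurd (h0 a c) hn
    | b + 1 => exact ⟨(a, b, c), rfl⟩

lemma tsum_shift₃ (f : ℕ × ℕ × ℕ → RR) (h0 : ∀ a b, f (a, b, 0) = 0) :
    ∑' n : ℕ × ℕ × ℕ, f (n.1, n.2.1, n.2.2 + 1) = ∑' n, f n := by
  apply Function.Injective.tsum_eq (g := fun n : ℕ × ℕ × ℕ => (n.1, n.2.1, n.2.2 + 1))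
  · rintro ⟨a, b, c⟩ ⟨a', b', c'⟩ hEq
    simp only [Prod.mk.injEq] at hEq
    obtain ⟨h1, h2, h3⟩ := hEq
    simp only [Prod.mk.injEq]
    omega
  · rintro ⟨a, b, c⟩ hn
    match c with
    | 0 => exact absurd (h0 a b) hn
    | c + 1 => exact ⟨(a, b, c), rfl⟩

/-! ### Units and basic identities -/

lemma poch_succ' (A B : RR) (n : ℕ) :
    poch A B (n + 1) = poch A B n * (1 - A * B ^ n) :=
  Finset.prod_range_succ _ _

lemma constQq_pow (k : ℕ) (hk : k ≠ 0) :
    MvPowerSeries.constantCoeff (σ := Fin 2) (R := ℚ) (Qq ^ k) = 0 := by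
  rw [map_pow, Qq, MvPowerSeries.constantCoeff_X, zero_pow hk]

lemma const_one_sub (k : ℕ) (hk : k ≠ 0) :
    MvPowerSeries.constantCoeff (σ := Fin 2) (R := ℚ) (1 - Qq ^ k) = 1 := by
  rw [map_sub, map_one, constQq_pow k hk, sub_zero]

lemma unit_cancel (k : ℕ) (hk : k ≠ 0) : (1 - Qq ^ k) * (1 - Qq ^ k)⁻¹ = 1 :=
  MvPowerSeries.mul_inv_cancel _ (by rw [const_one_sub k hk]; exact one_ne_zero)

lemma Qq_sq_pow (a : ℕ) : (Qq ^ 2 : RR) * (Qq ^ 2) ^ a = Qq ^ (2 * a + 2) := by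
  rw [← pow_mul, ← pow_add]
  ring

lemma Qq_six_pow (c : ℕ) : (Qq ^ 6 : RR) * (Qq ^ 6) ^ c = Qq ^ (6 * c + 6) := by
  rw [← pow_mul, ← pow_add]
  ring

lemma Pd_succ₁ (a b c : ℕ) : Pd (a + 1) b c = Pd a b c * (1 - Qq ^ (2 * a + 2)) := by
  simp only [Pd, poch_succ', Qq_sq_pow]
  ring

lemma Pd_succ₂ (a b c : ℕ) : Pd a (b + 1) c = Pd a b c * (1 - Qq ^ (2 * b + 2)) := by
  simp only [Pd, poch_succ', Qq_sq_pow]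
  ring

lemma Pd_succ₃ (a b c : ℕ) : Pd a b (c + 1) = Pd a b c * (1 - Qq ^ (6 * c + 6)) := by
  simp only [Pd, poch_succ', Qq_six_pow]
  ring

lemma choose2_succ (n : ℕ) : Nat.choose (n + 1) 2 = Nat.choose n 2 + n := by
  rw [show (2 : ℕ) = 1 + 1 from rfl, Nat.choose_succ_succ, Nat.choose_one_right]
  exact Nat.add_comm n _

lemma Ee_succ₁ (a b c : ℕ) :
    Eeq (a + 1) b c = Eeq a b c + (4 * a + 2 * b + 6 * c + 1) := by
  simp only [Eeq, choose2_succ]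
  ring

lemma Ee_succ₂ (a b c : ℕ) :
    Eeq a (b + 1) c = Eeq a b c + (2 * a + 4 * b + 6 * c + 2) := by
  simp only [Eeq, choose2_succ]
  ring

lemma Ee_succ₃ (a b c : ℕ) :
    Eeq a b (c + 1) = Eeq a b c + (6 * a + 6 * b + 18 * c + 9) := by
  simp only [Eeq, choose2_succ]
  ring

/-! ### The three contiguous relations -/

lemma rel₁ (a b c : ℕ) :
    (1 - Qq ^ (2 * a + 2)) * cc (a + 1) b c = Qq ^ (4 * a + 2 * b + 6 * c + 1) * cc a b c := by
  have hsplit : (Qq : RR) ^ (Eeq a b c + (4 * a + 2 * b + 6 * c + 1))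
      = Qq ^ Eeq a b c * Qq ^ (4 * a + 2 * b + 6 * c + 1) := pow_add _ _ _
  simp only [cc, Ee_succ₁, Pd_succ₁, MvPowerSeries.mul_inv_rev]
  rw [hsplit]
  linear_combination ((-1 : RR) ^ c * Qq ^ Eeq a b c * Qq ^ (4 * a + 2 * b + 6 * c + 1)
    * (Pd a b c)⁻¹) * unit_cancel (2 * a + 2) (by omega)

lemma rel₂ (a b c : ℕ) :
    (1 - Qq ^ (2 * b + 2)) * cc a (b + 1) c = Qq ^ (2 * a + 4 * b + 6 * c + 2) * cc a b c := by
  have hsplit : (Qq : RR) ^ (Eeq a b c + (2 * a + 4 * b + 6 * c + 2))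
      = Qq ^ Eeq a b c * Qq ^ (2 * a + 4 * b + 6 * c + 2) := pow_add _ _ _
  simp only [cc, Ee_succ₂, Pd_succ₂, MvPowerSeries.mul_inv_rev]
  rw [hsplit]
  linear_combination ((-1 : RR) ^ c * Qq ^ Eeq a b c * Qq ^ (2 * a + 4 * b + 6 * c + 2)
    * (Pd a b c)⁻¹) * unit_cancel (2 * b + 2) (by omega)

lemma rel₃ (a b c : ℕ) :
    (1 - Qq ^ (6 * c + 6)) * cc a b (c + 1)
      = -(Qq ^ (6 * a + 6 * b + 18 * c + 9) * cc a b c) := by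
  have hsplit : (Qq : RR) ^ (Eeq a b c + (6 * a + 6 * b + 18 * c + 9))
      = Qq ^ Eeq a b c * Qq ^ (6 * a + 6 * b + 18 * c + 9) := pow_add _ _ _
  have hsign : ((-1 : RR)) ^ (c + 1) = (-1 : RR) ^ c * (-1 : RR) := pow_succ _ _
  simp only [cc, Ee_succ₃, Pd_succ₃, MvPowerSeries.mul_inv_rev]
  rw [hsplit, hsign]
  linear_combination (-((-1 : RR) ^ c * Qq ^ Eeq a b c * Qq ^ (6 * a + 6 * b + 18 * c + 9)
    * (Pd a b c)⁻¹)) * unit_cancel (6 * c + 6) (by omega)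

/-! ### The six reindexed families -/

def F0 (n : ℕ × ℕ × ℕ) : RR :=
  Xx ^ mdeg n.1 n.2.1 n.2.2
    * ((1 - Qq ^ (2 * mdeg n.1 n.2.1 n.2.2)) * cc n.1 n.2.1 n.2.2)

def F1 (n : ℕ × ℕ × ℕ) : RR :=
  -(Xx ^ mdeg n.1 n.2.1 n.2.2
    * (Qq ^ (6 * n.2.1 + 6 * n.2.2) * ((1 - Qq ^ (2 * n.1)) * cc n.1 n.2.1 n.2.2)))

def F2 (n : ℕ × ℕ × ℕ) : RR :=
  Xx ^ mdeg n.1 n.2.1 n.2.2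
    * ((Qq ^ (2 * mdeg n.1 n.2.1 n.2.2) - 1 - Qq ^ 2 - Qq ^ 4)
      * ((1 - Qq ^ (2 * n.2.1)) * cc n.1 n.2.1 n.2.2))

def F3 (n : ℕ × ℕ × ℕ) : RR :=
  -(Xx ^ mdeg n.1 n.2.1 n.2.2
    * (Qq ^ (6 * n.2.1) * ((1 - Qq ^ (6 * n.2.2)) * cc n.1 n.2.1 n.2.2)))

def F4 (n : ℕ × ℕ × ℕ) : RR :=
  Xx ^ mdeg n.1 n.2.1 n.2.2
    * ((Qq ^ 2 + Qq ^ 4 + Qq ^ 6)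
      * ((1 - Qq ^ (2 * n.2.1)) * ((1 - Qq ^ (2 * n.2.1 - 2)) * cc n.1 n.2.1 n.2.2)))

def F6 (n : ℕ × ℕ × ℕ) : RR :=
  -(Xx ^ mdeg n.1 n.2.1 n.2.2
    * (Qq ^ 6 * ((1 - Qq ^ (2 * n.2.1))
      * ((1 - Qq ^ (2 * n.2.1 - 2)) * ((1 - Qq ^ (2 * n.2.1 - 4)) * cc n.1 n.2.1 n.2.2)))))

/-- the key termwise identity -/
lemma key (n : ℕ × ℕ × ℕ) : F0 n + F1 n + F2 n + F3 n + F4 n + F6 n = 0 := by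
  obtain ⟨a, b, c⟩ := n
  match b with
  | 0 =>
      simp only [F0, F1, F2, F3, F4, F6, mdeg]
      norm_num
      ring
  | 1 =>
      simp only [F0, F1, F2, F3, F4, F6, mdeg]
      norm_num
      ring
  | 2 =>
      simp only [F0, F1, F2, F3, F4, F6, mdeg]
      norm_num
      ring
  | b + 3 =>
      simp only [F0, F1, F2, F3, F4, F6, mdeg]
      rw [show 2 * (b + 3) - 2 = 2 * b + 4 by omega, show 2 * (b + 3) - 4 = 2 * b + 2 by omega]
      ring

/-! ### The shifted pieces -/

def P1f (n : ℕ × ℕ × ℕ) : RR :=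
  -(Xx ^ (mdeg n.1 n.2.1 n.2.2 + 1)
    * (Qq ^ (4 * mdeg n.1 n.2.1 n.2.2 + 1) * cc n.1 n.2.1 n.2.2))

def P2f (n : ℕ × ℕ × ℕ) : RR :=
  Xx ^ (mdeg n.1 n.2.1 n.2.2 + 2)
    * ((Qq ^ (4 * mdeg n.1 n.2.1 n.2.2 + 6) - Qq ^ (2 * mdeg n.1 n.2.1 n.2.2 + 2)
        - Qq ^ (2 * mdeg n.1 n.2.1 n.2.2 + 4) - Qq ^ (2 * mdeg n.1 n.2.1 n.2.2 + 6))
      * cc n.1 n.2.1 n.2.2)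

def P3f (n : ℕ × ℕ × ℕ) : RR :=
  Xx ^ (mdeg n.1 n.2.1 n.2.2 + 3)
    * (Qq ^ (6 * mdeg n.1 n.2.1 n.2.2 + 9) * cc n.1 n.2.1 n.2.2)

def P4f (n : ℕ × ℕ × ℕ) : RR :=
  Xx ^ (mdeg n.1 n.2.1 n.2.2 + 4)
    * ((Qq ^ (4 * mdeg n.1 n.2.1 n.2.2 + 10) + Qq ^ (4 * mdeg n.1 n.2.1 n.2.2 + 12)
        + Qq ^ (4 * mdeg n.1 n.2.1 n.2.2 + 14)) * cc n.1 n.2.1 n.2.2)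

def P6f (n : ℕ × ℕ × ℕ) : RR :=
  -(Xx ^ (mdeg n.1 n.2.1 n.2.2 + 6)
    * (Qq ^ (6 * mdeg n.1 n.2.1 n.2.2 + 24) * cc n.1 n.2.1 n.2.2))

lemma hF1 (y : ℕ × ℕ × ℕ) : P1f y = F1 (y.1 + 1, y.2.1, y.2.2) := by
  obtain ⟨a, b, c⟩ := y
  simp only [P1f, F1, mdeg]
  linear_combination (Xx ^ (a + 2 * b + 3 * c + 1) * Qq ^ (6 * b + 6 * c)) * rel₁ a b c

lemma hF2 (y : ℕ × ℕ × ℕ) : P2f y = F2 (y.1, y.2.1 + 1, y.2.2) := by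
  obtain ⟨a, b, c⟩ := y
  simp only [P2f, F2, mdeg]
  linear_combination (-(Xx ^ (a + 2 * b + 3 * c + 2)
    * (Qq ^ (2 * (a + 2 * b + 3 * c) + 4) - 1 - Qq ^ 2 - Qq ^ 4))) * rel₂ a b c

lemma hF3 (y : ℕ × ℕ × ℕ) : P3f y = F3 (y.1, y.2.1, y.2.2 + 1) := by
  obtain ⟨a, b, c⟩ := y
  simp only [P3f, F3, mdeg]
  linear_combination (Xx ^ (a + 2 * b + 3 * c + 3) * Qq ^ (6 * b)) * rel₃ a b c

lemma hF4 (y : ℕ × ℕ × ℕ) : P4f y = F4 (y.1, y.2.1 + 2, y.2.2) := by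
  obtain ⟨a, b, c⟩ := y
  simp only [P4f, F4, mdeg]
  rw [show 2 * (b + 2) - 2 = 2 * b + 2 by omega]
  have r2 := rel₂ a (b + 1) c
  rw [show b + 1 + 1 = b + 2 from rfl] at r2
  have r1 := rel₂ a b c
  linear_combination
    (-(Xx ^ (a + 2 * b + 3 * c + 4) * (Qq ^ 2 + Qq ^ 4 + Qq ^ 6) * (1 - Qq ^ (2 * b + 2)))) * r2
    + (-(Xx ^ (a + 2 * b + 3 * c + 4) * (Qq ^ 2 + Qq ^ 4 + Qq ^ 6)
        * Qq ^ (2 * (a + 2 * b + 3 * c) + 6))) * r1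

lemma hF6 (y : ℕ × ℕ × ℕ) : P6f y = F6 (y.1, y.2.1 + 3, y.2.2) := by
  obtain ⟨a, b, c⟩ := y
  simp only [P6f, F6, mdeg]
  rw [show 2 * (b + 3) - 2 = 2 * b + 4 by omega, show 2 * (b + 3) - 4 = 2 * b + 2 by omega]
  have r3 := rel₂ a (b + 2) c
  rw [show b + 2 + 1 = b + 3 from rfl] at r3
  have r2 := rel₂ a (b + 1) c
  rw [show b + 1 + 1 = b + 2 from rfl] at r2
  have r1 := rel₂ a b c
  linear_combination
    (Xx ^ (a + 2 * b + 3 * c + 6) * Qq ^ 6 * (1 - Qq ^ (2 * b + 4)) * (1 - Qq ^ (2 * b + 2))) * r3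
    + (Xx ^ (a + 2 * b + 3 * c + 6) * Qq ^ 6 * Qq ^ (2 * (a + 2 * b + 3 * c) + 10)
        * (1 - Qq ^ (2 * b + 2))) * r2
    + (Xx ^ (a + 2 * b + 3 * c + 6) * Qq ^ 6 * Qq ^ (4 * (a + 2 * b + 3 * c) + 16)) * r1

/-! ### tsum-level piece identities -/

lemma sumP1 : ∑' n : ℕ × ℕ × ℕ, P1f n = ∑' n : ℕ × ℕ × ℕ, F1 n := by
  calc ∑' n : ℕ × ℕ × ℕ, P1f n
      = ∑' n : ℕ × ℕ × ℕ, F1 (n.1 + 1, n.2.1, n.2.2) := tsum_congr hF1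
    _ = ∑' n : ℕ × ℕ × ℕ, F1 n := tsum_shift₁ F1 (fun b c => by simp [F1])

lemma sumP2 : ∑' n : ℕ × ℕ × ℕ, P2f n = ∑' n : ℕ × ℕ × ℕ, F2 n := by
  calc ∑' n : ℕ × ℕ × ℕ, P2f n
      = ∑' n : ℕ × ℕ × ℕ, F2 (n.1, n.2.1 + 1, n.2.2) := tsum_congr hF2
    _ = ∑' n : ℕ × ℕ × ℕ, F2 n := tsum_shift₂ F2 (fun a c => by simp [F2])

lemma sumP3 : ∑' n : ℕ × ℕ × ℕ, P3f n = ∑' n : ℕ × ℕ × ℕ, F3 n := by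
  calc ∑' n : ℕ × ℕ × ℕ, P3f n
      = ∑' n : ℕ × ℕ × ℕ, F3 (n.1, n.2.1, n.2.2 + 1) := tsum_congr hF3
    _ = ∑' n : ℕ × ℕ × ℕ, F3 n := tsum_shift₃ F3 (fun a b => by simp [F3])

lemma sumP4 : ∑' n : ℕ × ℕ × ℕ, P4f n = ∑' n : ℕ × ℕ × ℕ, F4 n := by
  calc ∑' n : ℕ × ℕ × ℕ, P4f n
      = ∑' n : ℕ × ℕ × ℕ, F4 (n.1, n.2.1 + 2, n.2.2) := tsum_congr hF4
    _ = ∑' n : ℕ × ℕ × ℕ, F4 (n.1, n.2.1 + 1, n.2.2) :=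
        tsum_shift₂ (fun k : ℕ × ℕ × ℕ => F4 (k.1, k.2.1 + 1, k.2.2))
          (fun a c => by simp [F4])
    _ = ∑' n : ℕ × ℕ × ℕ, F4 n := tsum_shift₂ F4 (fun a c => by simp [F4])

lemma sumP6 : ∑' n : ℕ × ℕ × ℕ, P6f n = ∑' n : ℕ × ℕ × ℕ, F6 n := by
  calc ∑' n : ℕ × ℕ × ℕ, P6f n
      = ∑' n : ℕ × ℕ × ℕ, F6 (n.1, n.2.1 + 3, n.2.2) := tsum_congr hF6
    _ = ∑' n : ℕ × ℕ × ℕ, F6 (n.1, n.2.1 + 2, n.2.2) :=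
        tsum_shift₂ (fun k : ℕ × ℕ × ℕ => F6 (k.1, k.2.1 + 2, k.2.2))
          (fun a c => by simp [F6])
    _ = ∑' n : ℕ × ℕ × ℕ, F6 (n.1, n.2.1 + 1, n.2.2) :=
        tsum_shift₂ (fun k : ℕ × ℕ × ℕ => F6 (k.1, k.2.1 + 1, k.2.2))
          (fun a c => by simp [F6])
    _ = ∑' n : ℕ × ℕ × ℕ, F6 n := tsum_shift₂ F6 (fun a c => by simp [F6])

theorem S_q_difference_equation :
    0 =
      S Xx
      - (Xx ^ 2 * Qq ^ 2 * (1 + Qq ^ 2 + Qq ^ 4) + 1) * S (Xx * Qq ^ 2)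
      + (Xx ^ 4 * Qq ^ 10 * (1 + Qq ^ 2 + Qq ^ 4) + Xx ^ 2 * Qq ^ 6 - Xx * Qq)
        * S (Xx * Qq ^ 4)
      - (Xx ^ 6 * Qq ^ 24 - Xx ^ 3 * Qq ^ 9) * S (Xx * Qq ^ 6) := by
  classical
  symm
  set G2 : RR := Xx ^ 2 * Qq ^ 2 * (1 + Qq ^ 2 + Qq ^ 4) + 1 with hG2
  set G4 : RR := Xx ^ 4 * Qq ^ 10 * (1 + Qq ^ 2 + Qq ^ 4) + Xx ^ 2 * Qq ^ 6 - Xx * Qq with hG4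
  set G6 : RR := Xx ^ 6 * Qq ^ 24 - Xx ^ 3 * Qq ^ 9 with hG6
  have s0 : Summable (fun n : ℕ × ℕ × ℕ =>
      Xx ^ mdeg n.1 n.2.1 n.2.2 * cc n.1 n.2.1 n.2.2) := summable_main _
  have s2 : Summable (fun n : ℕ × ℕ × ℕ =>
      Xx ^ mdeg n.1 n.2.1 n.2.2 * (Qq ^ (2 * mdeg n.1 n.2.1 n.2.2) * cc n.1 n.2.1 n.2.2)) :=
    summable_main _
  have s4 : Summable (fun n : ℕ × ℕ × ℕ =>
      Xx ^ mdeg n.1 n.2.1 n.2.2 * (Qq ^ (4 * mdeg n.1 n.2.1 n.2.2) * cc n.1 n.2.1 n.2.2)) :=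
    summable_main _
  have s6 : Summable (fun n : ℕ × ℕ × ℕ =>
      Xx ^ mdeg n.1 n.2.1 n.2.2 * (Qq ^ (6 * mdeg n.1 n.2.1 n.2.2) * cc n.1 n.2.1 n.2.2)) :=
    summable_main _
  have sF0 : Summable F0 :=
    (summable_main (fun n => (1 - Qq ^ (2 * mdeg n.1 n.2.1 n.2.2)) * cc n.1 n.2.1 n.2.2)).congr
      (fun n => rfl)
  have sP1 : Summable P1f :=
    (summable_main (fun n => -(Xx * (Qq ^ (4 * mdeg n.1 n.2.1 n.2.2 + 1)
      * cc n.1 n.2.1 n.2.2)))).congr (fun n => by simp only [P1f]; ring)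
  have sP2 : Summable P2f :=
    (summable_main (fun n => Xx ^ 2 * ((Qq ^ (4 * mdeg n.1 n.2.1 n.2.2 + 6)
      - Qq ^ (2 * mdeg n.1 n.2.1 n.2.2 + 2) - Qq ^ (2 * mdeg n.1 n.2.1 n.2.2 + 4)
      - Qq ^ (2 * mdeg n.1 n.2.1 n.2.2 + 6)) * cc n.1 n.2.1 n.2.2))).congr
      (fun n => by simp only [P2f]; ring)
  have sP3 : Summable P3f :=
    (summable_main (fun n => Xx ^ 3 * (Qq ^ (6 * mdeg n.1 n.2.1 n.2.2 + 9)
      * cc n.1 n.2.1 n.2.2))).congr (fun n => by simp only [P3f]; ring)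
  have sP4 : Summable P4f :=
    (summable_main (fun n => Xx ^ 4 * ((Qq ^ (4 * mdeg n.1 n.2.1 n.2.2 + 10)
      + Qq ^ (4 * mdeg n.1 n.2.1 n.2.2 + 12) + Qq ^ (4 * mdeg n.1 n.2.1 n.2.2 + 14))
      * cc n.1 n.2.1 n.2.2))).congr (fun n => by simp only [P4f]; ring)
  have sP6 : Summable P6f :=
    (summable_main (fun n => -(Xx ^ 6 * (Qq ^ (6 * mdeg n.1 n.2.1 n.2.2 + 24)
      * cc n.1 n.2.1 n.2.2)))).congr (fun n => by simp only [P6f]; ring)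
  have sF1 : Summable F1 :=
    (summable_main (fun n => -(Qq ^ (6 * n.2.1 + 6 * n.2.2)
      * ((1 - Qq ^ (2 * n.1)) * cc n.1 n.2.1 n.2.2)))).congr
      (fun n => by simp only [F1]; ring)
  have sF2 : Summable F2 :=
    (summable_main (fun n => (Qq ^ (2 * mdeg n.1 n.2.1 n.2.2) - 1 - Qq ^ 2 - Qq ^ 4)
      * ((1 - Qq ^ (2 * n.2.1)) * cc n.1 n.2.1 n.2.2))).congr (fun n => rfl)
  have sF3 : Summable F3 :=
    (summable_main (fun n => -(Qq ^ (6 * n.2.1)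
      * ((1 - Qq ^ (6 * n.2.2)) * cc n.1 n.2.1 n.2.2)))).congr
      (fun n => by simp only [F3]; ring)
  have sF4 : Summable F4 :=
    (summable_main (fun n => (Qq ^ 2 + Qq ^ 4 + Qq ^ 6) * ((1 - Qq ^ (2 * n.2.1))
      * ((1 - Qq ^ (2 * n.2.1 - 2)) * cc n.1 n.2.1 n.2.2)))).congr (fun n => rfl)
  have sF6 : Summable F6 :=
    (summable_main (fun n => -(Qq ^ 6 * ((1 - Qq ^ (2 * n.2.1))
      * ((1 - Qq ^ (2 * n.2.1 - 2)) * ((1 - Qq ^ (2 * n.2.1 - 4))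
      * cc n.1 n.2.1 n.2.2)))))).congr (fun n => by simp only [F6]; ring)
  calc S Xx - G2 * S (Xx * Qq ^ 2) + G4 * S (Xx * Qq ^ 4) - G6 * S (Xx * Qq ^ 6)
      = (∑' n : ℕ × ℕ × ℕ, Xx ^ mdeg n.1 n.2.1 n.2.2 * cc n.1 n.2.1 n.2.2)
        - G2 * (∑' n : ℕ × ℕ × ℕ, Xx ^ mdeg n.1 n.2.1 n.2.2
            * (Qq ^ (2 * mdeg n.1 n.2.1 n.2.2) * cc n.1 n.2.1 n.2.2))
        + G4 * (∑' n : ℕ × ℕ × ℕ, Xx ^ mdeg n.1 n.2.1 n.2.2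
            * (Qq ^ (4 * mdeg n.1 n.2.1 n.2.2) * cc n.1 n.2.1 n.2.2))
        - G6 * (∑' n : ℕ × ℕ × ℕ, Xx ^ mdeg n.1 n.2.1 n.2.2
            * (Qq ^ (6 * mdeg n.1 n.2.1 n.2.2) * cc n.1 n.2.1 n.2.2)) := by
        rw [S_eq Xx, S_eqk 2, S_eqk 4, S_eqk 6]
    _ = (∑' n : ℕ × ℕ × ℕ, Xx ^ mdeg n.1 n.2.1 n.2.2 * cc n.1 n.2.1 n.2.2)
        - (∑' n : ℕ × ℕ × ℕ, G2 * (Xx ^ mdeg n.1 n.2.1 n.2.2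
            * (Qq ^ (2 * mdeg n.1 n.2.1 n.2.2) * cc n.1 n.2.1 n.2.2)))
        + (∑' n : ℕ × ℕ × ℕ, G4 * (Xx ^ mdeg n.1 n.2.1 n.2.2
            * (Qq ^ (4 * mdeg n.1 n.2.1 n.2.2) * cc n.1 n.2.1 n.2.2)))
        - (∑' n : ℕ × ℕ × ℕ, G6 * (Xx ^ mdeg n.1 n.2.1 n.2.2
            * (Qq ^ (6 * mdeg n.1 n.2.1 n.2.2) * cc n.1 n.2.1 n.2.2))) := by
        rw [Summable.tsum_mul_left G2 s2, Summable.tsum_mul_left G4 s4,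
          Summable.tsum_mul_left G6 s6]
    _ = ∑' n : ℕ × ℕ × ℕ,
          (Xx ^ mdeg n.1 n.2.1 n.2.2 * cc n.1 n.2.1 n.2.2
            - G2 * (Xx ^ mdeg n.1 n.2.1 n.2.2
                * (Qq ^ (2 * mdeg n.1 n.2.1 n.2.2) * cc n.1 n.2.1 n.2.2))
            + G4 * (Xx ^ mdeg n.1 n.2.1 n.2.2
                * (Qq ^ (4 * mdeg n.1 n.2.1 n.2.2) * cc n.1 n.2.1 n.2.2))
            - G6 * (Xx ^ mdeg n.1 n.2.1 n.2.2
                * (Qq ^ (6 * mdeg n.1 n.2.1 n.2.2) * cc n.1 n.2.1 n.2.2))) := by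
        rw [Summable.tsum_sub ((s0.sub (s2.mul_left G2)).add (s4.mul_left G4)) (s6.mul_left G6),
          Summable.tsum_add (s0.sub (s2.mul_left G2)) (s4.mul_left G4),
          Summable.tsum_sub s0 (s2.mul_left G2)]
    _ = ∑' n : ℕ × ℕ × ℕ,
          (F0 n + (P1f n + (P2f n + (P3f n + (P4f n + P6f n))))) := by
        refine tsum_congr fun n => ?_
        rw [hG2, hG4, hG6]
        simp only [F0, P1f, P2f, P3f, P4f, P6f]
        ring
    _ = (∑' n : ℕ × ℕ × ℕ, F0 n) + ((∑' n : ℕ × ℕ × ℕ, P1f n)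
          + ((∑' n : ℕ × ℕ × ℕ, P2f n) + ((∑' n : ℕ × ℕ × ℕ, P3f n)
          + ((∑' n : ℕ × ℕ × ℕ, P4f n) + (∑' n : ℕ × ℕ × ℕ, P6f n))))) := by
        rw [Summable.tsum_add sF0 (sP1.add (sP2.add (sP3.add (sP4.add sP6)))),
          Summable.tsum_add sP1 (sP2.add (sP3.add (sP4.add sP6))),
          Summable.tsum_add sP2 (sP3.add (sP4.add sP6)),
          Summable.tsum_add sP3 (sP4.add sP6),
          Summable.tsum_add sP4 sP6]
    _ = (∑' n : ℕ × ℕ × ℕ, F0 n) + ((∑' n : ℕ × ℕ × ℕ, F1 n)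
          + ((∑' n : ℕ × ℕ × ℕ, F2 n) + ((∑' n : ℕ × ℕ × ℕ, F3 n)
          + ((∑' n : ℕ × ℕ × ℕ, F4 n) + (∑' n : ℕ × ℕ × ℕ, F6 n))))) := by
        rw [sumP1, sumP2, sumP3, sumP4, sumP6]
    _ = ∑' n : ℕ × ℕ × ℕ,
          (F0 n + (F1 n + (F2 n + (F3 n + (F4 n + F6 n))))) := by
        rw [Summable.tsum_add sF0 (sF1.add (sF2.add (sF3.add (sF4.add sF6)))),
          Summable.tsum_add sF1 (sF2.add (sF3.add (sF4.add sF6))),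
          Summable.tsum_add sF2 (sF3.add (sF4.add sF6)),
          Summable.tsum_add sF3 (sF4.add sF6),
          Summable.tsum_add sF4 sF6]
    _ = ∑' _ : ℕ × ℕ × ℕ, (0 : RR) := by
        refine tsum_congr fun n => ?_
        linear_combination key n
    _ = 0 := tsum_zero
end
end

section
/- In the ring of formal power series in x and q with rational coefficients, (−xq; q³)_∞ · (−xq²; q³)_∞ = Σ_{n1,n2,n3≥0} x^{n1+n2+2n3} q^{3C(n1,2)+3C(n2,2)+6C(n3,2)+3n1n2+3n2n3+3n3n1+n1+2n2+3n3} / ((q³;q³)_{n1} (q³;q³)_{n2} (q³;q³)_{n3}), where (−xq; q³)_∞ · (−xq²; q³)_∞ = ∏_{k≥0} (1 + xq^{3k+1})(1 + xq^{3k+2}). -/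
noncomputable section

abbrev M := MvPowerSeries (Fin 2) ℚ

open MvPowerSeries Finset Filter Topology

instance : T2Space M := inferInstanceAs (T2Space ((Fin 2 →₀ ℕ) → ℚ))
instance : T3Space M := inferInstanceAs (T3Space ((Fin 2 →₀ ℕ) → ℚ))
instance : ContinuousAdd M := inferInstanceAs (ContinuousAdd ((Fin 2 →₀ ℕ) → ℚ))
instance : ContinuousMul M := by
  constructor
  apply continuous_pi_iff.mpr ?_
  intro d
  have : (fun p : M × M => (p.1 * p.2) d) =
      fun p : M × M => ∑ e ∈ Finset.HasAntidiagonal.antidiagonal d, p.1 e.1 * p.2 e.2 := by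
    funext p
    rw [show (p.1 * p.2) d = MvPowerSeries.coeff d (p.1 * p.2) from rfl,
      MvPowerSeries.coeff_mul]
    rfl
  rw [this]
  exact continuous_finset_sum _ fun e _ =>
    (((continuous_apply e.1).comp continuous_fst).mul
      ((continuous_apply e.2).comp continuous_snd))
instance : IsTopologicalSemiring M :=
  { toContinuousAdd := inferInstance, toContinuousMul := inferInstance }

lemma hasSum_coeff_support {ι : Type*} (f : ι → M) (s : (Fin 2 →₀ ℕ) → Finset ι)
    (h0 : ∀ d i, i ∉ s d → coeff d (f i) = 0) :
    HasSum f (fun d => ∑ i ∈ s d, coeff d (f i)) := by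
  have key : ∀ d : Fin 2 →₀ ℕ, Tendsto (fun u : Finset ι => (∑ i ∈ u, f i) d) atTop
      (𝓝 (∑ i ∈ s d, coeff d (f i))) := by
    intro d
    apply Tendsto.congr' _ tendsto_const_nhds
    filter_upwards [Filter.eventually_ge_atTop (s d)] with u hu
    rw [show (∑ i ∈ u, f i) d = coeff d (∑ i ∈ u, f i) from rfl, map_sum]
    exact Finset.sum_subset hu fun i _ hi => h0 d i hi
  exact tendsto_pi_nhds.mpr key

lemma coeff_X_high {e : ℕ} {d : Fin 2 →₀ ℕ} (h : d 0 < e) (φ : M) :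
    coeff d (Xx ^ e * φ) = 0 := by
  rw [Xx, X_pow_eq, coeff_mul]
  apply Finset.sum_eq_zero
  rintro ⟨e1, e2⟩ hmem
  dsimp only at hmem ⊢
  rw [coeff_monomial]
  split
  · next heq =>
    exfalso
    rw [Finset.HasAntidiagonal.mem_antidiagonal] at hmem
    have : e1 0 + e2 0 = d 0 := by rw [← Finsupp.add_apply, hmem]
    rw [heq] at this
    simp [Finsupp.single_apply] at this
    omega
  · simp

/-- every coefficient with q-degree `≤ W` vanishes -/
def HiW (W : ℕ) (h : M) : Prop := ∀ e : Fin 2 →₀ ℕ, e 1 ≤ W → coeff e h = 0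

lemma HiW.mul_left {W : ℕ} {h : M} (hh : HiW W h) (φ : M) : HiW W (φ * h) := by
  intro e he
  rw [coeff_mul]
  apply Finset.sum_eq_zero
  rintro ⟨e1, e2⟩ hmem
  dsimp only at hmem ⊢
  rw [Finset.HasAntidiagonal.mem_antidiagonal] at hmem
  have : e1 1 + e2 1 = e 1 := by rw [← Finsupp.add_apply, hmem]
  rw [hh e2 (by omega), mul_zero]

lemma HiW.mul_right {W : ℕ} {h : M} (hh : HiW W h) (φ : M) : HiW W (h * φ) := by
  rw [mul_comm]; exact hh.mul_left φ

lemma HiW.add {W : ℕ} {g h : M} (hg : HiW W g) (hh : HiW W h) : HiW W (g + h) := by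
  intro e he; rw [map_add, hg e he, hh e he, add_zero]

lemma HiW.neg {W : ℕ} {h : M} (hh : HiW W h) : HiW W (-h) := by
  intro e he; rw [map_neg, hh e he, neg_zero]

lemma coeff_mul_one_add {W : ℕ} {h : M} (hh : HiW W h) {d : Fin 2 →₀ ℕ} (hd : d 1 ≤ W)
    (φ : M) : coeff d (φ * (1 + h)) = coeff d φ := by
  rw [mul_add, mul_one, map_add, (hh.mul_left φ) d hd, add_zero]

lemma hiW_prod_one_add {ι : Type*} (W : ℕ) (s : Finset ι) (g : ι → M)
    (hg : ∀ i ∈ s, HiW W (g i)) :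
    ∃ h : M, HiW W h ∧ ∏ i ∈ s, (1 + g i) = 1 + h := by
  classical
  induction s using Finset.induction with
  | empty => exact ⟨0, fun e _ => by simp, by simp⟩
  | insert a s' hnot ih =>
    obtain ⟨h, hh, hprod⟩ := ih fun i hi => hg i (Finset.mem_insert_of_mem hi)
    refine ⟨h + g a * (1 + h), hh.add ((hg a (Finset.mem_insert_self a s')).mul_right _), ?_⟩
    rw [Finset.prod_insert hnot, hprod]
    ring

/-- `Q = q³` -/
def Qc : M := Qq ^ 3
/-- `(q³; q³)_n` -/
def E (n : ℕ) : M := poch (Qq ^ 3) (Qq ^ 3) n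

lemma E_zero : E 0 = 1 := by simp [E, poch]

lemma E_succ (n : ℕ) : E (n + 1) = E n * (1 - Qc ^ (n + 1)) := by
  rw [E, poch, Finset.prod_range_succ, ← poch, ← E, Qc, ← pow_succ']

lemma constantCoeff_Qc_pow (j : ℕ) (hj : 0 < j) : constantCoeff (Qc ^ j) = 0 := by
  rw [Qc, Qq, ← pow_mul, map_pow, constantCoeff_X, zero_pow (by omega)]

lemma constantCoeff_E (n : ℕ) : constantCoeff (E n) = 1 := by
  induction n with
  | zero => rw [E_zero, map_one]
  | succ n ih =>
    rw [E_succ, map_mul, ih, map_sub, map_one, constantCoeff_Qc_pow _ (by omega), sub_zero,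
      one_mul]

lemma E_ne (n : ℕ) : E n ≠ 0 := fun h => by
  have := constantCoeff_E n; rw [h, map_zero] at this; exact one_ne_zero this.symm

lemma E_mul_inv (n : ℕ) : E n * (E n)⁻¹ = 1 :=
  MvPowerSeries.mul_inv_cancel _ (by rw [constantCoeff_E]; exact one_ne_zero)

/-- Gaussian binomial coefficients (in `M`, as polynomials in `Qc`). -/
def Bb : ℕ → ℕ → M
  | _, 0 => 1
  | 0, _ + 1 => 0
  | m + 1, k + 1 => Bb m k + Qc ^ (k + 1) * Bb m (k + 1)

@[simp] lemma Bb_zero_right (m : ℕ) : Bb m 0 = 1 := by cases m <;> rfl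

lemma Bb_eq_zero : ∀ {m k : ℕ}, m < k → Bb m k = 0
  | 0, _ + 1, _ => rfl
  | m + 1, k + 1, h => by
    rw [show Bb (m+1) (k+1) = Bb m k + Qc ^ (k+1) * Bb m (k+1) from rfl,
      Bb_eq_zero (by omega), Bb_eq_zero (by omega), mul_zero, add_zero]

lemma Bb_one : ∀ m : ℕ, Bb m 1 = ∑ i ∈ Finset.range m, Qc ^ i
  | 0 => rfl
  | m + 1 => by
    rw [show Bb (m+1) 1 = Bb m 0 + Qc ^ 1 * Bb m 1 from rfl, Bb_one m, Bb_zero_right,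
      geom_sum_succ, pow_one]
    ring

/-- second Pascal rule -/
lemma Bb_pascal2 : ∀ m k : ℕ, Bb (m + 1) (k + 1) = Bb m (k + 1) + Qc ^ (m - k) * Bb m k
  | m, 0 => by
    rw [Bb_one, Bb_one, Bb_zero_right, Nat.sub_zero, mul_one, Finset.sum_range_succ]
  | 0, k + 1 => by
    rw [Bb_eq_zero (show (0:ℕ) < k + 2 by omega)]
    simp [Bb_eq_zero]
  | m + 1, k + 1 => by
    have hL : Bb (m + 2) (k + 2) = (Bb m (k + 1) + Qc ^ (m - k) * Bb m k)
        + Qc ^ (k + 2) * (Bb m (k + 2) + Qc ^ (m - (k + 1)) * Bb m (k + 1)) := by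
      rw [show Bb (m+2) (k+2) = Bb (m+1) (k+1) + Qc ^ (k+2) * Bb (m+1) (k+2) from rfl,
        Bb_pascal2 m k, Bb_pascal2 m (k + 1)]
    rw [hL, show Bb (m+1) (k+2) = Bb m (k+1) + Qc ^ (k+2) * Bb m (k+2) from rfl,
      show Bb (m+1) (k+1) = Bb m k + Qc ^ (k+1) * Bb m (k+1) from rfl,
      show m + 1 - (k + 1) = m - k by omega]
    by_cases hk : k < m
    · rw [show m - k = (m - k - 1) + 1 by omega, show m - (k + 1) = m - k - 1 by omega]
      ring
    · rw [Bb_eq_zero (show m < k + 1 by omega), Bb_eq_zero (show m < k + 2 by omega)]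
      ring

lemma Bb_mul_E : ∀ m k : ℕ, k ≤ m → Bb m k * E k * E (m - k) = E m := by
  intro m
  induction m with
  | zero => intro k hk; interval_cases k; simp [E_zero]
  | succ m ih =>
    rintro (_ | k) hk
    · simp [E_zero]
    · rw [show Bb (m+1) (k+1) = Bb m k + Qc ^ (k+1) * Bb m (k+1) from rfl, E_succ k]
      by_cases hkm : k + 1 ≤ m
      · have h1 : m + 1 - (k + 1) = (m - (k + 1)) + 1 := by omega
        rw [h1, E_succ (m - (k + 1))]
        have h2 : m - (k + 1) + 1 = m - k := by omega
        have e1 : Bb m k * E k * E (m - k) = E m := ih k (by omega)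
        have e2 : Bb m (k + 1) * E (k + 1) * E (m - (k + 1)) = E m := ih (k + 1) hkm
        rw [E_succ m]
        calc (Bb m k + Qc ^ (k+1) * Bb m (k+1)) * (E k * (1 - Qc ^ (k+1)))
            * (E (m - (k+1)) * (1 - Qc ^ (m - (k+1) + 1)))
            = (Bb m k * E k * (E (m - (k+1)) * (1 - Qc ^ (m - (k+1) + 1)))) * (1 - Qc ^ (k+1))
              + Qc ^ (k+1) * (1 - Qc ^ (m - (k+1) + 1))
                * (Bb m (k+1) * (E k * (1 - Qc ^ (k+1))) * E (m - (k+1))) := by ring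
          _ = E m * (1 - Qc ^ (m + 1)) := by
              rw [← E_succ (m - (k+1)), h2, ← E_succ k, e1, e2]
              have h3 : m - k + (k + 1) = m + 1 := by omega
              calc E m * (1 - Qc ^ (k+1)) + Qc ^ (k+1) * (1 - Qc ^ (m - k)) * E m
                  = E m * (1 - Qc ^ (m - k) * Qc ^ (k+1)) := by ring
                _ = E m * (1 - Qc ^ (m + 1)) := by rw [← pow_add, h3]
      · have hkm' : k = m := by omega
        subst hkm'
        rw [Bb_eq_zero (show k < k + 1 by omega), mul_zero, add_zero, Nat.sub_self, E_zero,
          mul_one, E_succ k]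
        have e1 : Bb k k * E k = E k := by
          have := ih k le_rfl
          rwa [Nat.sub_self, E_zero, mul_one] at this
        rw [← mul_assoc, e1]

lemma keyK (m k : ℕ) :
    Qc ^ (m - k) * (Bb m k * E k) + Bb m (k + 1) * E (k + 1) = Bb m k * E k := by
  by_cases hk : k < m
  · apply mul_right_cancel₀ (E_ne (m - k - 1)) ?_
    have e1 : Bb m (k + 1) * E (k + 1) * E (m - k - 1) = E m := by
      have := Bb_mul_E m (k + 1) (by omega)
      rwa [show m - (k + 1) = m - k - 1 by omega] at this
    have e2 : Bb m k * E k * E (m - k) = E m := Bb_mul_E m k (by omega)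
    rw [add_mul, mul_assoc (Bb m (k+1)) (E (k+1)), ← mul_assoc (Bb m (k+1)), e1]
    have h2 : E (m - k) = E (m - k - 1) * (1 - Qc ^ (m - k)) := by
      conv_lhs => rw [show m - k = (m - k - 1) + 1 by omega, E_succ, show m - k - 1 + 1 = m - k by omega]
    have h3 : Bb m k * E k * (E (m - k - 1) * (1 - Qc ^ (m - k))) = E m := by
      rw [← h2]; exact e2
    linear_combination -h3
  · rw [Bb_eq_zero (show m < k + 1 by omega), zero_mul, add_zero,
      show m - k = 0 by omega, pow_zero, one_mul]

/-- first family in the Durfee-style recursion -/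
def Fg (m n k : ℕ) : M := Qc ^ ((m - k) * (n + 1 - k)) * (Bb m k * Bb n k * E k)
/-- second family in the Durfee-style recursion -/
def Hg (m n k : ℕ) : M :=
  Qc ^ ((m - (k+1)) * (n - k) + (n - k)) * (Bb m (k+1) * Bb n k * E (k+1))

lemma G_lemma (m : ℕ) : ∀ n : ℕ,
    ∑ k ∈ Finset.range (n + 1), Qc ^ ((m - k) * (n - k)) * (Bb m k * Bb n k * E k) = 1 := by
  intro n
  induction n with
  | zero => simp [E_zero]
  | succ n ih =>
    have hstep : ∀ x ∈ Finset.range (n + 1),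
        Qc ^ ((m - (x+1)) * (n + 1 - (x+1))) * (Bb m (x+1) * Bb (n+1) (x+1) * E (x+1))
          = Fg m n (x+1) + Hg m n x := by
      intro x hx
      rw [Fg, Hg, Bb_pascal2 n x, show n + 1 - (x + 1) = n - x by omega, pow_add]
      ring
    calc ∑ k ∈ Finset.range (n + 2),
          Qc ^ ((m - k) * (n + 1 - k)) * (Bb m k * Bb (n+1) k * E k)
        = ∑ x ∈ Finset.range (n+1), (Qc ^ ((m - (x+1)) * (n + 1 - (x+1)))
            * (Bb m (x+1) * Bb (n+1) (x+1) * E (x+1)))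
          + Qc ^ ((m - 0) * (n + 1 - 0)) * (Bb m 0 * Bb (n+1) 0 * E 0) :=
        Finset.sum_range_succ' _ (n+1)
      _ = ∑ x ∈ Finset.range (n+1), (Fg m n (x+1) + Hg m n x) + Fg m n 0 := by
          rw [Finset.sum_congr rfl hstep]; congr 1; simp [Fg]
      _ = (∑ x ∈ Finset.range (n+1), Fg m n (x+1) + Fg m n 0)
          + ∑ x ∈ Finset.range (n+1), Hg m n x := by
          rw [Finset.sum_add_distrib]; ring
      _ = ∑ k ∈ Finset.range (n+2), Fg m n k + ∑ x ∈ Finset.range (n+1), Hg m n x := by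
          rw [Finset.sum_range_succ' (Fg m n) (n+1)]
      _ = ∑ k ∈ Finset.range (n+1), Fg m n k + ∑ x ∈ Finset.range (n+1), Hg m n x := by
          rw [Finset.sum_range_succ (Fg m n) (n+1),
            show Fg m n (n+1) = 0 by simp [Fg, Bb_eq_zero (show n < n+1 by omega)], add_zero]
      _ = ∑ k ∈ Finset.range (n+1), Qc ^ ((m - k) * (n - k)) * (Bb m k * Bb n k * E k) := by
          rw [← Finset.sum_add_distrib]
          apply Finset.sum_congr rfl
          intro k hk
          rw [Finset.mem_range] at hk
          rw [Fg, Hg]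
          by_cases hkm : k < m
          · have h1 : (m - k) * (n + 1 - k) = (m - k) * (n - k) + (m - k) := by
              rw [show n + 1 - k = (n - k) + 1 by omega]; ring
            have h2 : (m - (k + 1)) * (n - k) + (n - k) = (m - k) * (n - k) := by
              rw [show m - k = (m - (k + 1)) + 1 by omega]; ring
            rw [h1, h2, pow_add]
            calc Qc ^ ((m-k)*(n-k)) * Qc ^ (m-k) * (Bb m k * Bb n k * E k)
                  + Qc ^ ((m-k)*(n-k)) * (Bb m (k+1) * Bb n k * E (k+1))
                = Qc ^ ((m-k)*(n-k)) * Bb n k *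
                    (Qc ^ (m-k) * (Bb m k * E k) + Bb m (k+1) * E (k+1)) := by ring
              _ = Qc ^ ((m-k)*(n-k)) * Bb n k * (Bb m k * E k) := by rw [keyK]
              _ = Qc ^ ((m-k)*(n-k)) * (Bb m k * Bb n k * E k) := by ring
          · rw [Bb_eq_zero (show m < k + 1 by omega), show m - k = 0 by omega,
              show m - (k + 1) = 0 by omega]
            simp
      _ = 1 := ih

lemma inv_term (m n k : ℕ) (hm : k ≤ m) (hn : k ≤ n) :
    (E (m - k) * E (n - k) * E k)⁻¹ = Bb m k * Bb n k * E k * ((E m)⁻¹ * (E n)⁻¹) := by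
  have hc : constantCoeff (E (m - k) * E (n - k) * E k) ≠ 0 := by
    rw [map_mul, map_mul, constantCoeff_E, constantCoeff_E, constantCoeff_E]
    norm_num
  rw [eq_comm, MvPowerSeries.eq_inv_iff_mul_eq_one hc]
  have h1 := Bb_mul_E m k hm
  have h2 := Bb_mul_E n k hn
  calc Bb m k * Bb n k * E k * ((E m)⁻¹ * (E n)⁻¹) * (E (m - k) * E (n - k) * E k)
      = (Bb m k * E k * E (m - k)) * (Bb n k * E k * E (n - k)) * ((E m)⁻¹ * (E n)⁻¹) := by
        ring
    _ = (E m * (E m)⁻¹) * (E n * (E n)⁻¹) := by rw [h1, h2]; ring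
    _ = 1 := by rw [E_mul_inv, E_mul_inv, one_mul]

lemma sum_inv (m n : ℕ) :
    ∑ k ∈ Finset.range (min m n + 1), Qc ^ ((m - k) * (n - k)) * (E (m - k) * E (n - k) * E k)⁻¹
      = (E m)⁻¹ * (E n)⁻¹ := by
  have hcongr : ∀ k ∈ Finset.range (min m n + 1),
      Qc ^ ((m - k) * (n - k)) * (E (m - k) * E (n - k) * E k)⁻¹
        = (Qc ^ ((m - k) * (n - k)) * (Bb m k * Bb n k * E k)) * ((E m)⁻¹ * (E n)⁻¹) := by
    intro k hk
    rw [Finset.mem_range] at hk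
    rw [inv_term m n k (by omega) (by omega)]
    ring
  rw [Finset.sum_congr rfl hcongr, ← Finset.sum_mul]
  have hsub : ∑ k ∈ Finset.range (min m n + 1),
      Qc ^ ((m - k) * (n - k)) * (Bb m k * Bb n k * E k)
      = ∑ k ∈ Finset.range (n + 1), Qc ^ ((m - k) * (n - k)) * (Bb m k * Bb n k * E k) := by
    apply Finset.sum_subset
    · intro x hx
      rw [Finset.mem_range] at *
      omega
    · intro x hx hx'
      rw [Finset.mem_range] at *
      rw [Bb_eq_zero (show m < x by omega)]
      ring
  rw [hsub, G_lemma, one_mul]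

lemma choose_succ_two (x : ℕ) : (x + 1).choose 2 = x.choose 2 + x := by
  rw [Nat.choose_succ_succ x 1, Nat.choose_one_right, Nat.add_comm]

lemma choose_add_two (a : ℕ) : ∀ k : ℕ, (a + k).choose 2 = a.choose 2 + k.choose 2 + a * k
  | 0 => by simp
  | k + 1 => by
    rw [show a + (k + 1) = (a + k) + 1 by omega, choose_succ_two, choose_add_two a k,
      choose_succ_two]
    ring

lemma qbinom (A : M) : ∀ N : ℕ,
    ∏ k ∈ Finset.range N, (1 + A * Qc ^ k)
      = ∑ j ∈ Finset.range (N + 1), A ^ j * Qc ^ (j.choose 2) * Bb N j := by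
  intro N
  induction N with
  | zero => simp
  | succ N ih =>
    have hpiece2 : ∀ x ∈ Finset.range (N + 1),
        A ^ x * Qc ^ (x.choose 2) * Bb N x * (A * Qc ^ N)
          = A ^ (x+1) * Qc ^ ((x+1).choose 2) * (Qc ^ (N - x) * Bb N x) := by
      intro x hx
      rw [Finset.mem_range] at hx
      have hN : Qc ^ x * Qc ^ (N - x) = Qc ^ N := by
        rw [← pow_add]; congr 1; omega
      rw [choose_succ_two, pow_add, pow_succ, ← hN]
      ring
    calc ∏ k ∈ Finset.range (N + 1), (1 + A * Qc ^ k)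
        = (∑ j ∈ Finset.range (N + 1), A ^ j * Qc ^ (j.choose 2) * Bb N j)
            * (1 + A * Qc ^ N) := by rw [Finset.prod_range_succ, ih]
      _ = ∑ j ∈ Finset.range (N + 1), A ^ j * Qc ^ (j.choose 2) * Bb N j
          + ∑ j ∈ Finset.range (N + 1), A ^ j * Qc ^ (j.choose 2) * Bb N j * (A * Qc ^ N) := by
          rw [mul_add, mul_one, Finset.sum_mul]
      _ = (∑ x ∈ Finset.range (N + 1), A ^ (x+1) * Qc ^ ((x+1).choose 2) * Bb N (x+1) + 1)
          + ∑ x ∈ Finset.range (N + 1),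
              A ^ (x+1) * Qc ^ ((x+1).choose 2) * (Qc ^ (N - x) * Bb N x) := by
          congr 1
          · rw [Finset.sum_range_succ' (fun j => A ^ j * Qc ^ (j.choose 2) * Bb N j) N,
              Finset.sum_range_succ
                (fun x => A ^ (x+1) * Qc ^ ((x+1).choose 2) * Bb N (x+1)) N,
              Bb_eq_zero (show N < N + 1 by omega)]
            simp
          · exact Finset.sum_congr rfl hpiece2
      _ = ∑ j ∈ Finset.range (N + 2), A ^ j * Qc ^ (j.choose 2) * Bb (N + 1) j := by
          rw [Finset.sum_range_succ' (fun j => A ^ j * Qc ^ (j.choose 2) * Bb (N+1) j) (N+1)]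
          have hsplit : ∀ x ∈ Finset.range (N + 1),
              A ^ (x+1) * Qc ^ ((x+1).choose 2) * Bb (N+1) (x+1)
                = A ^ (x+1) * Qc ^ ((x+1).choose 2) * Bb N (x+1)
                  + A ^ (x+1) * Qc ^ ((x+1).choose 2) * (Qc ^ (N - x) * Bb N x) := by
            intro x _
            rw [Bb_pascal2 N x]
            ring
          rw [Finset.sum_congr rfl hsplit, Finset.sum_add_distrib]
          simp only [Bb_zero_right, pow_zero, Nat.choose_zero_right, mul_one, one_mul]
          rw [show Nat.choose 0 2 = 0 from rfl, pow_zero]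
          ring

lemma E_eq (n : ℕ) : E n = ∏ k ∈ Finset.range n, (1 - Qc ^ (k + 1)) := by
  induction n with
  | zero => simp [E_zero]
  | succ n ih => rw [E_succ, ih, Finset.prod_range_succ]

lemma hiW_Qq_pow {W r : ℕ} (h : W < r) : HiW W (Qq ^ r) := by
  intro e he
  rw [Qq, MvPowerSeries.X_pow_eq, MvPowerSeries.coeff_monomial]
  split
  · next heq =>
    exfalso
    have : e 1 = r := by rw [heq]; simp
    omega
  · rfl

lemma hiW_Qc_pow {W r : ℕ} (h : W < r) : HiW W (Qc ^ r) := by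
  rw [Qc, ← pow_mul]
  exact hiW_Qq_pow (by omega)

lemma hiW_X_mul_Q {W r : ℕ} (h : W < r) : HiW W (Xx * Qq ^ r) := by
  intro e he
  have hX : Xx = MvPowerSeries.monomial (Finsupp.single (0 : Fin 2) 1) 1 := by
    rw [Xx, ← pow_one (MvPowerSeries.X (0 : Fin 2) : M), MvPowerSeries.X_pow_eq]
  rw [hX, Qq, MvPowerSeries.X_pow_eq, MvPowerSeries.monomial_mul_monomial,
    MvPowerSeries.coeff_monomial]
  split
  · next heq =>
    exfalso
    have : e 1 = r := by rw [heq]; simp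
    omega
  · rfl

/-- `Bb N j` agrees with `(E j)⁻¹` up to terms of high `q`-order. -/
lemma Bb_approx {N j W : ℕ} (hj : j ≤ N) (hW : W < N - j + 1) :
    ∃ h : M, HiW W h ∧ Bb N j = (E j)⁻¹ * (1 + h) := by
  obtain ⟨h, hh, hprod⟩ := hiW_prod_one_add W (Finset.range j)
    (fun i => -(Qc ^ (N - j + i + 1))) (by
      intro i _
      exact (hiW_Qc_pow (show W < N - j + i + 1 by omega)).neg)
  refine ⟨h, hh, ?_⟩
  have hEN : E N = E (N - j) * (1 + h) := by
    rw [← hprod]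
    conv_lhs => rw [E_eq, show N = (N - j) + j by omega, Finset.prod_range_add]
    rw [← E_eq]
    congr 1
    apply Finset.prod_congr rfl
    intro i _
    rw [sub_eq_add_neg]
  apply mul_right_cancel₀ (mul_ne_zero (E_ne j) (E_ne (N - j)))
  rw [show Bb N j * (E j * E (N - j)) = Bb N j * E j * E (N - j) by ring, Bb_mul_E N j hj, hEN]
  calc E (N - j) * (1 + h)
      = (E j * (E j)⁻¹) * ((1 + h) * E (N - j)) := by rw [E_mul_inv]; ring
    _ = (E j)⁻¹ * (1 + h) * (E j * E (N - j)) := by ring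

/-- the Euler summands -/
def vv (a n : ℕ) : M := Xx ^ n * Qq ^ (3 * n.choose 2 + a * n) * (E n)⁻¹
/-- the Euler sums, defined coefficientwise -/
def Pser (a : ℕ) : M := fun d => ∑ j ∈ Finset.range (d 0 + 1), coeff d (vv a j)

lemma coeff_vv_zero {a j : ℕ} {d : Fin 2 →₀ ℕ} (h : d 0 < j) : coeff d (vv a j) = 0 := by
  rw [vv, mul_assoc]
  exact coeff_X_high h _

lemma hasSum_vv (a : ℕ) : HasSum (vv a) (Pser a) := by
  apply hasSum_coeff_support (vv a) (fun d => Finset.range (d 0 + 1))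
  intro d i hi
  rw [Finset.mem_range] at hi
  exact coeff_vv_zero (by omega)

lemma vv_eq (a j : ℕ) : vv a j = (Xx * Qq ^ a) ^ j * Qc ^ (j.choose 2) * (E j)⁻¹ := by
  rw [vv]
  have : (Xx * Qq ^ a) ^ j * Qc ^ (j.choose 2) * (E j)⁻¹
      = Xx ^ j * ((Qq ^ a) ^ j * (Qq ^ 3) ^ (j.choose 2)) * (E j)⁻¹ := by
    rw [mul_pow, Qc]; ring
  rw [this, ← pow_mul, ← pow_mul, ← pow_add,
    show a * j + 3 * j.choose 2 = 3 * j.choose 2 + a * j by omega]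

lemma hasProd_factor (a : ℕ) (ha : 1 ≤ a) :
    HasProd (fun k => 1 + Xx * Qq ^ (3 * k + a)) (Pser a) := by
  rw [HasProd]
  apply tendsto_pi_nhds.mpr
  intro d
  apply Tendsto.congr' _ tendsto_const_nhds
  filter_upwards [Filter.eventually_ge_atTop (Finset.range (d 0 + d 1 + 1))] with s hs
  set N := d 0 + d 1 + 1 with hN
  -- tail of the product is 1 + (high order)
  obtain ⟨h, hh, hprod⟩ := hiW_prod_one_add (d 1) (s \ Finset.range N)
    (fun k => Xx * Qq ^ (3 * k + a)) (by
      intro k hk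
      rw [Finset.mem_sdiff, Finset.mem_range] at hk
      exact hiW_X_mul_Q (show d 1 < 3 * k + a by omega))
  have hsplit : ∏ k ∈ s, (1 + Xx * Qq ^ (3 * k + a))
      = (∏ k ∈ Finset.range N, (1 + Xx * Qq ^ (3 * k + a))) * (1 + h) := by
    rw [← hprod, mul_comm, Finset.prod_sdiff hs]
  show Pser a d = coeff d (∏ k ∈ s, (1 + Xx * Qq ^ (3 * k + a)))
  rw [hsplit, coeff_mul_one_add hh le_rfl]
  -- rewrite factors in terms of `Qc`
  have hfact : ∀ k : ℕ, 1 + Xx * Qq ^ (3 * k + a) = 1 + (Xx * Qq ^ a) * Qc ^ k := by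
    intro k
    rw [Qc, ← pow_mul, mul_assoc, ← pow_add, show a + 3 * k = 3 * k + a by omega]
  rw [Finset.prod_congr rfl (fun k _ => hfact k), qbinom, map_sum]
  have hterm : ∀ j ∈ Finset.range (N + 1),
      coeff d ((Xx * Qq ^ a) ^ j * Qc ^ (j.choose 2) * Bb N j)
        = coeff d (vv a j) := by
    intro j hj
    rw [Finset.mem_range] at hj
    by_cases hjd : j ≤ d 0
    · obtain ⟨h', hh', hBb⟩ := Bb_approx (show j ≤ N by omega) (show d 1 < N - j + 1 by omega)
      rw [hBb, show (Xx * Qq ^ a) ^ j * Qc ^ (j.choose 2) * ((E j)⁻¹ * (1 + h'))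
          = ((Xx * Qq ^ a) ^ j * Qc ^ (j.choose 2) * (E j)⁻¹) * (1 + h') by ring,
        coeff_mul_one_add hh' le_rfl, ← vv_eq]
    · rw [coeff_vv_zero (show d 0 < j by omega),
        show (Xx * Qq ^ a) ^ j * Qc ^ (j.choose 2) * Bb N j
          = Xx ^ j * ((Qq ^ a) ^ j * Qc ^ (j.choose 2) * Bb N j) by rw [mul_pow]; ring]
      exact coeff_X_high (by omega) _
  rw [Finset.sum_congr rfl hterm]
  rw [Pser]
  apply Finset.sum_subset
  · intro x hx
    rw [Finset.mem_range] at *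
    omega
  · intro x _ hx
    rw [Finset.mem_range] at hx
    exact coeff_vv_zero (by omega)

/-- the triple-sum summand -/
def tf (n : ℕ × ℕ × ℕ) : M :=
  Xx ^ (n.1 + n.2.1 + 2 * n.2.2)
    * Qq ^ (3 * Nat.choose n.1 2 + 3 * Nat.choose n.2.1 2 + 6 * Nat.choose n.2.2 2
        + 3 * n.1 * n.2.1 + 3 * n.2.1 * n.2.2 + 3 * n.2.2 * n.1
        + n.1 + 2 * n.2.1 + 3 * n.2.2)
    * (E n.1 * E n.2.1 * E n.2.2)⁻¹

/-- the triple sum, defined coefficientwise -/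
def Tser : M := fun d => ∑ i ∈ Finset.range (d 0 + 1) ×ˢ
    (Finset.range (d 0 + 1) ×ˢ Finset.range (d 0 + 1)), coeff d (tf i)

lemma coeff_tf_zero {i : ℕ × ℕ × ℕ} {d : Fin 2 →₀ ℕ} (h : d 0 < i.1 + i.2.1 + 2 * i.2.2) :
    coeff d (tf i) = 0 := by
  rw [tf, mul_assoc]
  exact coeff_X_high h _

lemma hasSum_tf : HasSum tf Tser := by
  apply hasSum_coeff_support tf (fun d => Finset.range (d 0 + 1) ×ˢ
    (Finset.range (d 0 + 1) ×ˢ Finset.range (d 0 + 1)))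
  intro d i hi
  simp only [Finset.mem_product, Finset.mem_range] at hi
  exact coeff_tf_zero (by omega)

lemma tf_term (m n k : ℕ) (hm : k ≤ m) (hn : k ≤ n) :
    tf (m - k, n - k, k) = Xx ^ (m + n) * Qq ^ (3 * m.choose 2 + 3 * n.choose 2 + m + 2 * n)
      * (Qc ^ ((m - k) * (n - k)) * (E (m - k) * E (n - k) * E k)⁻¹) := by
  obtain ⟨a, rfl⟩ : ∃ a, m = a + k := ⟨m - k, by omega⟩
  obtain ⟨b, rfl⟩ : ∃ b, n = b + k := ⟨n - k, by omega⟩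
  rw [show a + k - k = a by omega, show b + k - k = b by omega, tf]
  simp only
  rw [show a + k + (b + k) = a + b + 2 * k by omega, Qc, ← pow_mul,
    show 3 * a.choose 2 + 3 * b.choose 2 + 6 * k.choose 2 + 3 * a * b + 3 * b * k + 3 * k * a
        + a + 2 * b + 3 * k
      = (3 * (a + k).choose 2 + 3 * (b + k).choose 2 + (a + k) + 2 * (b + k)) + 3 * (a * b) by
        rw [choose_add_two a k, choose_add_two b k]; ring, pow_add]
  ring

lemma vv_mul (m n : ℕ) : vv 1 m * vv 2 n
    = Xx ^ (m + n) * Qq ^ (3 * m.choose 2 + 3 * n.choose 2 + m + 2 * n)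
      * ((E m)⁻¹ * (E n)⁻¹) := by
  rw [vv, vv, pow_add,
    show 3 * m.choose 2 + 3 * n.choose 2 + m + 2 * n
      = (3 * m.choose 2 + 1 * m) + (3 * n.choose 2 + 2 * n) by ring, pow_add]
  ring

lemma fiber_sum (m n : ℕ) :
    ∑ k ∈ Finset.range (min m n + 1), tf (m - k, n - k, k) = vv 1 m * vv 2 n := by
  have hcongr : ∀ k ∈ Finset.range (min m n + 1),
      tf (m - k, n - k, k)
        = Xx ^ (m + n) * Qq ^ (3 * m.choose 2 + 3 * n.choose 2 + m + 2 * n)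
          * (Qc ^ ((m - k) * (n - k)) * (E (m - k) * E (n - k) * E k)⁻¹) := by
    intro k hk
    rw [Finset.mem_range] at hk
    exact tf_term m n k (by omega) (by omega)
  rw [Finset.sum_congr rfl hcongr, ← Finset.mul_sum, sum_inv, vv_mul]

/-- the fiber map -/
def pr (i : ℕ × ℕ × ℕ) : ℕ × ℕ := (i.1 + i.2.2, i.2.1 + i.2.2)

def fiberEquiv (m n : ℕ) : Fin (min m n + 1) ≃ (pr ⁻¹' {(m, n)}) where
  toFun k := ⟨(m - k, n - k, k), by
    have := k.2
    simp only [Set.mem_preimage, Set.mem_singleton_iff, pr, Prod.mk.injEq]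
    omega⟩
  invFun c := ⟨c.1.2.2, by
    have := c.2
    simp only [Set.mem_preimage, Set.mem_singleton_iff, pr, Prod.mk.injEq] at this
    omega⟩
  left_inv k := by apply Fin.ext; rfl
  right_inv := by
    rintro ⟨⟨i1, i2, i3⟩, hc⟩
    simp only [Set.mem_preimage, Set.mem_singleton_iff, pr, Prod.mk.injEq] at hc
    apply Subtype.ext
    simp only
    obtain ⟨h1, h2⟩ := hc
    refine Prod.ext ?_ (Prod.ext ?_ ?_) <;> simp <;> omega

lemma hasSum_fiber (m n : ℕ) :
    HasSum (fun c : (pr ⁻¹' {(m, n)}) => tf ↑c) (vv 1 m * vv 2 n) := by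
  have hfin : HasSum (fun k : Fin (min m n + 1) => tf (m - ↑k, n - ↑k, ↑k))
      (vv 1 m * vv 2 n) := by
    have h := hasSum_fintype (fun k : Fin (min m n + 1) => tf (m - ↑k, n - ↑k, ↑k))
    rwa [Fin.sum_univ_eq_sum_range (fun k => tf (m - k, n - k, k)) (min m n + 1),
      fiber_sum] at h
  exact ((fiberEquiv m n).hasSum_iff).mp hfin

set_option maxHeartbeats 1000000 in
lemma hasSum_vvmul : HasSum (fun mn : ℕ × ℕ => vv 1 mn.1 * vv 2 mn.2) Tser := by
  apply HasSum.sigma ((Equiv.sigmaFiberEquiv pr).hasSum_iff.mpr hasSum_tf)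
  rintro ⟨m, n⟩
  exact hasSum_fiber m n

/-- Glei\ss berg's refinement, analytically:
`(-xq; q³)_∞ (-xq²; q³)_∞` equals an Andrews--Gordon type triple sum. -/
theorem AG_series_Gleissberg_analytic :
    (∏' k : ℕ, (1 + Xx * Qq ^ (3 * k + 1))) * (∏' k : ℕ, (1 + Xx * Qq ^ (3 * k + 2)))
      =
    ∑' n : ℕ × ℕ × ℕ,
      Xx ^ (n.1 + n.2.1 + 2 * n.2.2)
        * Qq ^ (3 * Nat.choose n.1 2 + 3 * Nat.choose n.2.1 2 + 6 * Nat.choose n.2.2 2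
            + 3 * n.1 * n.2.1 + 3 * n.2.1 * n.2.2 + 3 * n.2.2 * n.1
            + n.1 + 2 * n.2.1 + 3 * n.2.2)
        * (poch (Qq ^ 3) (Qq ^ 3) n.1 * poch (Qq ^ 3) (Qq ^ 3) n.2.1
            * poch (Qq ^ 3) (Qq ^ 3) n.2.2)⁻¹ := by
  rw [(hasProd_factor 1 le_rfl).tprod_eq, (hasProd_factor 2 (by omega)).tprod_eq,
    HasSum.mul_eq (hasSum_vv 1) (hasSum_vv 2) hasSum_vvmul]
  exact hasSum_tf.tsum_eq.symm
end
end
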